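/- arXiv:1502.01746 — 7 statements merged into one kernel-verified Lean document; each statement's English description precedes it below -/
import Mathlib

section
/- Any two Galois rings with the same parameters are isomorphic: if A and B are finite commutative local rings, both of characteristic p^n, both with maximal ideal generated by p, and whose residue fields both have exactly p^r elements, then A and B are isomorphic as rings. -/
/-!
Both rings are isomorphic to `(ZMod (p ^ n))[X] ⧸ (F)`, where `F` is a monic lift of the minimal
polynomial `q` over `𝔽_p` of a primitive element of `𝔽_{p^r}`; the two residue fields are
`𝔽_p`-isomorphic, so the same `F` serves for both rings. As `p` is nilpotent, such a ring is
Henselian, so the simple root of `q` in the residue field lifts to a root `α` of `F`. The map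
`X ↦ α` is surjective by successive approximation modulo powers of `p`. It is injective because a
class not divisible by `p` reduces to a nonzero element of `𝔽_p[X]/(q)`, hence maps to a unit,
while `p ^ k ≠ 0` in the ring for `k < n`.
-/

open Polynomial IsLocalRing

theorem IsAdicComplete.of_isNilpotent {R M : Type*} [CommRing R] [AddCommGroup M] [Module R M]
    {I : Ideal R} (h : IsNilpotent I) : IsAdicComplete I M := by
  obtain ⟨n, hn⟩ := h
  have hbot : (I ^ n • ⊤ : Submodule R M) = ⊥ := by
    rw [hn, Ideal.zero_eq_bot, Submodule.bot_smul]
  refine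
    { toIsHausdorff := ⟨fun x hx => ?_⟩
      toIsPrecomplete := ⟨fun f hf => ⟨f n, fun k => ?_⟩⟩ }
  · simpa [SModEq, hbot] using hx n
  · rcases le_total k n with hk | hk
    · exact hf hk
    · have hfk : f n ≡ f k [SMOD (I ^ n • ⊤ : Submodule R M)] := hf hk
      rw [hbot, SModEq.bot] at hfk
      rw [hfk]

theorem HenselianLocalRing.of_isNilpotent_maximalIdeal {R : Type*} [CommRing R] [IsLocalRing R]
    (h : IsNilpotent (maximalIdeal R)) : HenselianLocalRing R := by
  have := IsAdicComplete.of_isNilpotent (M := R) h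
  exact ⟨fun f hf a₀ h₁ h₂ => HenselianRing.is_henselian f hf a₀ h₁ (h₂.map _)⟩

theorem Ideal.isNilpotent_span_singleton {R : Type*} [CommRing R] {x : R} (hx : IsNilpotent x) :
    IsNilpotent (Ideal.span {x}) := by
  obtain ⟨n, hn⟩ := hx
  refine ⟨n, ?_⟩
  rw [Ideal.span_singleton_pow, hn, Ideal.zero_eq_bot, Ideal.span_singleton_eq_bot]

theorem RingHom.surjective_of_surjective_residue_comp {R A : Type*} [CommRing R] [CommRing A]
    [IsLocalRing A] (φ : R →+* A) {x : R} (hmax : maximalIdeal A = Ideal.span {φ x})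
    (hx : IsNilpotent (φ x)) (h : Function.Surjective ((residue A).comp φ)) :
    Function.Surjective φ := by
  have approx : ∀ k : ℕ, ∀ a : A, ∃ y b, a = φ y + φ x ^ k * b := by
    intro k
    induction k with
    | zero => exact fun a => ⟨0, a, by simp⟩
    | succ k ih =>
      intro a
      obtain ⟨y, b, rfl⟩ := ih a
      obtain ⟨z, hz⟩ := h (residue A b)
      have hbz : b - φ z ∈ maximalIdeal A := by
        rw [← residue_eq_zero_iff, map_sub, sub_eq_zero]
        exact hz.symm
      rw [hmax, Ideal.mem_span_singleton'] at hbz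
      obtain ⟨c, hc⟩ := hbz
      refine ⟨y + x ^ k * z, c, ?_⟩
      rw [map_add, map_mul, map_pow]
      linear_combination -φ x ^ k * hc
  obtain ⟨n, hn⟩ := hx
  intro a
  obtain ⟨y, b, rfl⟩ := approx n a
  exact ⟨y, by rw [hn, zero_mul, add_zero]⟩

theorem RingHom.injective_of_isUnit_of_notMem_span {R A : Type*} [CommRing R] [CommRing A]
    (φ : R →+* A) {x : R} (hx : IsNilpotent x) (hpow : ∀ k, φ x ^ k = 0 → x ^ k = 0)
    (hunit : ∀ y ∉ Ideal.span {x}, IsUnit (φ y)) : Function.Injective φ := by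
  rw [injective_iff_map_eq_zero]
  intro y hy
  have divisible : ∀ k, ∃ z, y = x ^ k * z := by
    intro k
    induction k with
    | zero => exact ⟨y, by simp⟩
    | succ k ih =>
      obtain ⟨z, rfl⟩ := ih
      by_cases hz : z ∈ Ideal.span {x}
      · obtain ⟨w, rfl⟩ := Ideal.mem_span_singleton'.mp hz
        exact ⟨w, by ring⟩
      · have hxk : x ^ k = 0 := hpow k <| by
          simpa [(hunit z hz).mul_left_eq_zero] using hy
        exact ⟨0, by simp [hxk]⟩
  obtain ⟨n, hn⟩ := hx
  obtain ⟨z, rfl⟩ := divisible n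
  rw [hn, zero_mul]

theorem IsLocalRing.ResidueField.charP {A : Type*} [CommRing A] [IsLocalRing A] {p : ℕ}
    (hp : p.Prime) (h : (p : A) ∈ maximalIdeal A) : CharP (ResidueField A) p := by
  rw [CharP.charP_iff_prime_eq_zero hp, ← map_natCast (residue A), residue_eq_zero_iff]
  exact h

theorem ZMod.ker_castHom {m k : ℕ} (h : m ∣ k) :
    RingHom.ker (ZMod.castHom h (ZMod m)) = Ideal.span {(m : ZMod k)} := by
  refine le_antisymm (fun c hc => ?_) ?_
  · obtain ⟨a, rfl⟩ := ZMod.intCast_surjective c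
    rw [RingHom.mem_ker, map_intCast, ZMod.intCast_zmod_eq_zero_iff_dvd] at hc
    obtain ⟨b, rfl⟩ := hc
    exact Ideal.mem_span_singleton.mpr ⟨b, by push_cast; rfl⟩
  · rw [Ideal.span_le, Set.singleton_subset_iff, SetLike.mem_coe, RingHom.mem_ker, map_natCast,
      ZMod.natCast_self]

theorem Polynomial.ker_map_castHom {m k : ℕ} (h : m ∣ k) :
    RingHom.ker (mapRingHom (ZMod.castHom h (ZMod m))) = Ideal.span {C (m : ZMod k)} := by
  rw [ker_mapRingHom, ZMod.ker_castHom, Ideal.map_span, Set.image_singleton]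

theorem AdjoinRoot.mk_mem_span_of_map_castHom_dvd {m k : ℕ} (h : m ∣ k) {F G : (ZMod k)[X]}
    (hdvd : F.map (ZMod.castHom h (ZMod m)) ∣ G.map (ZMod.castHom h (ZMod m))) :
    AdjoinRoot.mk F G ∈ Ideal.span {(m : AdjoinRoot F)} := by
  obtain ⟨H', hH'⟩ := hdvd
  obtain ⟨H, rfl⟩ := map_surjective _ (ZMod.castHom_surjective h) H'
  have hker : G - F * H ∈ Ideal.span {C (m : ZMod k)} := by
    rw [← ker_map_castHom h, RingHom.mem_ker, coe_mapRingHom, Polynomial.map_sub,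
      Polynomial.map_mul, hH', sub_self]
  have hmk := Ideal.mem_map_of_mem (AdjoinRoot.mk F) hker
  rwa [Ideal.map_span, Set.image_singleton, AdjoinRoot.mk_C, map_natCast, map_sub, map_mul,
    AdjoinRoot.mk_self, zero_mul, sub_zero] at hmk

section GaloisRing

variable {p n : ℕ} {A : Type*} [CommRing A] [IsLocalRing A] [CharP A (p ^ n)]

theorem aeval_map_castHom (hn : n ≠ 0) [Algebra (ZMod p) (ResidueField A)]
    (G : (ZMod (p ^ n))[X]) (a : ResidueField A) :
    aeval a (G.map (ZMod.castHom dvd_rfl A)) =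
      aeval a (G.map (ZMod.castHom (dvd_pow_self p hn) (ZMod p))) := by
  rw [aeval_def, eval₂_map, aeval_def, eval₂_map]
  congr 1
  exact RingHom.ext_zmod _ _

theorem exists_eval₂_castHom_eq_zero_residue_eq [Fact p.Prime] (hn : n ≠ 0)
    (hmax : maximalIdeal A = Ideal.span {(p : A)}) [Algebra (ZMod p) (ResidueField A)]
    [Finite (ResidueField A)] {F : (ZMod (p ^ n))[X]} (hFm : F.Monic) (a : ResidueField A)
    (hF : F.map (ZMod.castHom (dvd_pow_self p hn) (ZMod p)) = minpoly (ZMod p) a) :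
    ∃ α : A, F.eval₂ (ZMod.castHom dvd_rfl A) α = 0 ∧ residue A α = a := by
  have hnil : IsNilpotent (p : A) := ⟨n, by rw [← Nat.cast_pow, CharP.cast_eq_zero]⟩
  have : HenselianLocalRing A := .of_isNilpotent_maximalIdeal
    (hmax ▸ Ideal.isNilpotent_span_singleton hnil)
  have hsep : (minpoly (ZMod p) a).Separable := Algebra.IsSeparable.isSeparable (ZMod p) a
  have hensel := ((HenselianLocalRing.TFAE A).out 0 1).mp this
  obtain ⟨α, hα, hαa⟩ := hensel _ (hFm.map _) a
    (by rw [aeval_map_castHom hn, hF, minpoly.aeval])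
    (by rw [derivative_map, aeval_map_castHom hn, ← derivative_map, hF]
        exact hsep.aeval_derivative_ne_zero (minpoly.aeval _ _))
  exact ⟨α, by rwa [IsRoot, eval_map] at hα, hαa⟩

theorem nonempty_adjoinRoot_ringEquiv [Fact p.Prime] (hn : n ≠ 0)
    (hmax : maximalIdeal A = Ideal.span {(p : A)}) [Algebra (ZMod p) (ResidueField A)]
    [Finite (ResidueField A)] (pb : PowerBasis (ZMod p) (ResidueField A))
    {F : (ZMod (p ^ n))[X]} (hFm : F.Monic)
    (hF : F.map (ZMod.castHom (dvd_pow_self p hn) (ZMod p)) = minpoly (ZMod p) pb.gen) :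
    Nonempty (AdjoinRoot F ≃+* A) := by
  obtain ⟨α, hα, hαa⟩ := exists_eval₂_castHom_eq_zero_residue_eq hn hmax hFm pb.gen hF
  let φ := AdjoinRoot.lift (ZMod.castHom dvd_rfl A) α hα
  have hres : ∀ G, residue A (φ (AdjoinRoot.mk F G)) =
      aeval pb.gen (G.map (ZMod.castHom (dvd_pow_self p hn) (ZMod p))) := fun G => by
    rw [AdjoinRoot.lift_mk, ← eval_map, ← coe_aeval_eq_eval, ← aeval_map_castHom hn, ← hαa,
      ← ResidueField.algebraMap_eq, aeval_algebraMap_apply]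
  have hcast : ∀ m : ℕ, p ^ n ∣ m → (m : AdjoinRoot F) = 0 := fun m hm => by
    rw [← map_natCast (algebraMap (ZMod (p ^ n)) _), (ZMod.natCast_eq_zero_iff _ _).mpr hm,
      map_zero]
  have hsurj : Function.Surjective φ := by
    refine φ.surjective_of_surjective_residue_comp (x := p) (by rw [map_natCast, hmax])
      ⟨n, by rw [map_natCast, ← Nat.cast_pow, CharP.cast_eq_zero]⟩ fun y => ?_
    obtain ⟨g, rfl⟩ := pb.exists_eq_aeval' y
    obtain ⟨G, rfl⟩ := map_surjective _ (ZMod.castHom_surjective (dvd_pow_self p hn)) g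
    exact ⟨AdjoinRoot.mk F G, hres G⟩
  have hinj : Function.Injective φ := by
    refine φ.injective_of_isUnit_of_notMem_span (x := p)
      ⟨n, by rw [← Nat.cast_pow]; exact hcast _ dvd_rfl⟩ (fun k hk => ?_) fun y hy => ?_
    · rw [map_natCast, ← Nat.cast_pow, CharP.cast_eq_zero_iff A (p ^ n)] at hk
      rw [← Nat.cast_pow]
      exact hcast _ hk
    · induction y using AdjoinRoot.induction_on with | ih G => ?_
      by_contra hG
      refine hy (AdjoinRoot.mk_mem_span_of_map_castHom_dvd (dvd_pow_self p hn) ?_)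
      rw [hF]
      exact minpoly.dvd _ _ (by rw [← hres, residue_eq_zero_iff]; exact hG)
  exact ⟨RingEquiv.ofBijective φ ⟨hinj, hsurj⟩⟩

end GaloisRing

theorem galois_ring_unique_general (p n r : ℕ) (hp : p.Prime) (hn : 0 < n)
    (A B : Type) [CommRing A] [IsLocalRing A]
    [CommRing B] [IsLocalRing B]
    (hcharA : CharP A (p ^ n)) (hcharB : CharP B (p ^ n))
    (hmaxA : IsLocalRing.maximalIdeal A = Ideal.span {(p : A)})
    (hmaxB : IsLocalRing.maximalIdeal B = Ideal.span {(p : B)})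
    (hresA : Nat.card (IsLocalRing.ResidueField A) = p ^ r)
    (hresB : Nat.card (IsLocalRing.ResidueField B) = p ^ r) :
    Nonempty (A ≃+* B) := by
  have := Fact.mk hp
  have := ResidueField.charP hp (hmaxA ▸ Ideal.mem_span_singleton_self (p : A))
  have := ResidueField.charP hp (hmaxB ▸ Ideal.mem_span_singleton_self (p : B))
  let _ := ZMod.algebra (ResidueField A) p
  let _ := ZMod.algebra (ResidueField B) p
  have : Finite (ResidueField A) := Nat.finite_of_card_ne_zero (hresA ▸ (pow_pos hp.pos r).ne')
  have : Finite (ResidueField B) := Nat.finite_of_card_ne_zero (hresB ▸ (pow_pos hp.pos r).ne')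
  let _ := Fintype.ofFinite (ResidueField A)
  let _ := Fintype.ofFinite (ResidueField B)
  let e := FiniteField.algEquivOfCardEq p (K := ResidueField A) (K' := ResidueField B)
    (by rw [← Nat.card_eq_fintype_card, ← Nat.card_eq_fintype_card, hresA, hresB])
  let pb := Field.powerBasisOfFiniteOfSeparable (ZMod p) (ResidueField A)
  obtain ⟨F, hF, -, hFm⟩ := lifts_and_degree_eq_and_monic
    (map_surjective _ (ZMod.castHom_surjective (dvd_pow_self p hn.ne')) _)
    (minpoly.monic pb.isIntegral_gen)
  obtain ⟨eA⟩ := nonempty_adjoinRoot_ringEquiv hn.ne' hmaxA pb hFm hF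
  obtain ⟨eB⟩ := nonempty_adjoinRoot_ringEquiv hn.ne' hmaxB (pb.map e) hFm
    (by rw [pb.map_gen, minpoly.algEquiv_eq, hF])
  exact ⟨eA.symm.trans eB⟩

/-- **Uniqueness of Galois rings.** Any two finite commutative local rings of
characteristic `p ^ n`, whose maximal ideal is generated by `p`, and whose residue
fields both have `p ^ r` elements, are isomorphic as rings. -/
theorem galois_ring_unique (p n r : ℕ) (hp : p.Prime) (hn : 0 < n) (hr : 0 < r)
    (A B : Type) [CommRing A] [Fintype A] [IsLocalRing A]
    [CommRing B] [Fintype B] [IsLocalRing B]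
    (hcharA : CharP A (p ^ n)) (hcharB : CharP B (p ^ n))
    (hmaxA : IsLocalRing.maximalIdeal A = Ideal.span {(p : A)})
    (hmaxB : IsLocalRing.maximalIdeal B = Ideal.span {(p : B)})
    (hresA : Nat.card (IsLocalRing.ResidueField A) = p ^ r)
    (hresB : Nat.card (IsLocalRing.ResidueField B) = p ^ r) :
    Nonempty (A ≃+* B) :=
  galois_ring_unique_general p n r hp hn A B hcharA hcharB hmaxA hmaxB hresA hresB
end

section
/- Let A be a Galois ring GR(p^n, r). If p is odd, or if p = 2 and n ≤ 2, then the multiplicative group 1 + pA is isomorphic as a group to the direct product of r copies of ℤ/p^{n−1}ℤ. -/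
/-- The subgroup `1 + pA` of the unit group of `A`, consisting of the units of the
form `1 + p * a`. -/
def onePlusP (p : ℕ) (A : Type) [CommRing A] : Subgroup Aˣ where
  carrier := {u : Aˣ | ∃ a : A, (u : A) = 1 + p * a}
  one_mem' := ⟨0, by simp⟩
  mul_mem' := by
    rintro u v ⟨a, ha⟩ ⟨b, hb⟩
    exact ⟨a + b + p * a * b, by push_cast; rw [ha, hb]; ring⟩
  inv_mem' := by
    rintro u ⟨a, ha⟩
    refine ⟨-(a * (↑u⁻¹ : A)), ?_⟩
    have h1 : (↑u⁻¹ : A) * (u : A) = 1 := u.inv_mul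
    calc (↑u⁻¹ : A) = (↑u⁻¹ : A) * (1 + p * a) - p * a * (↑u⁻¹ : A) := by ring
    _ = 1 + (p : A) * -(a * (↑u⁻¹ : A)) := by rw [← ha, h1]; ring

open IsLocalRing
namespace GaloisRingAux

variable {p n : ℕ} {A : Type} [CommRing A]

/-- The ideal `(p^k)`. -/
def J (p : ℕ) (A : Type) [CommRing A] (k : ℕ) : Ideal A := Ideal.span {(p : A) ^ k}

lemma mem_J {k : ℕ} {x : A} : x ∈ J p A k ↔ ∃ a, x = (p : A) ^ k * a := by
  rw [J, Ideal.mem_span_singleton']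
  constructor
  · rintro ⟨a, rfl⟩; exact ⟨a, mul_comm _ _⟩
  · rintro ⟨a, rfl⟩; exact ⟨a, mul_comm _ _⟩

lemma J_anti {k l : ℕ} (h : k ≤ l) : J p A l ≤ J p A k :=
  Ideal.span_singleton_le_span_singleton.mpr (pow_dvd_pow _ h)

lemma mul_mem_J {a b : ℕ} {x y : A} (hx : x ∈ J p A a) (hy : y ∈ J p A b) :
    x * y ∈ J p A (a + b) := by
  obtain ⟨c, rfl⟩ := mem_J.mp hx
  obtain ⟨d, rfl⟩ := mem_J.mp hy
  exact mem_J.mpr ⟨c * d, by rw [pow_add]; ring⟩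

lemma pow_mem_J {a m : ℕ} {x : A} (hx : x ∈ J p A a) : x ^ m ∈ J p A (a * m) := by
  obtain ⟨c, rfl⟩ := mem_J.mp hx
  exact mem_J.mpr ⟨c ^ m, by rw [mul_pow, ← pow_mul]⟩

lemma pcast_mem_J : (p : A) ∈ J p A 1 := mem_J.mpr ⟨1, by rw [pow_one, mul_one]⟩

lemma pcast_pow_eq_zero_iff (hp : p.Prime) (hchar : CharP A (p ^ n)) {m : ℕ} :
    (p : A) ^ m = 0 ↔ n ≤ m := by
  rw [← Nat.cast_pow, CharP.cast_eq_zero_iff A (p ^ n),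
    Nat.pow_dvd_pow_iff_le_right hp.one_lt]

lemma J_n_eq_bot (hp : p.Prime) (hchar : CharP A (p ^ n)) : J p A n = ⊥ := by
  rw [J, Ideal.span_singleton_eq_bot]
  exact (pcast_pow_eq_zero_iff hp hchar).mpr le_rfl

lemma J_zero_eq_top : J p A 0 = ⊤ := by
  rw [J, pow_zero, Ideal.span_singleton_one]


variable [IsLocalRing A]


lemma exists_decomp (hp : p.Prime) (hn : 0 < n) (hchar : CharP A (p ^ n))
    (hmax : maximalIdeal A = Ideal.span {(p : A)}) {x : A} (hx : x ≠ 0) :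
    ∃ k, k < n ∧ ∃ u : A, IsUnit u ∧ x = (p : A) ^ k * u := by
  classical
  have hPn : ∃ k, x ∉ J p A k := ⟨n, by rw [J_n_eq_bot hp hchar]; simpa using hx⟩
  set k0 := Nat.find hPn with hk0
  have hk0n : k0 ≤ n := Nat.find_le (by rw [J_n_eq_bot hp hchar]; simpa using hx)
  have hk0pos : 0 < k0 := by
    rcases Nat.eq_zero_or_pos k0 with h | h
    · exfalso
      have := Nat.find_spec hPn
      rw [← hk0, h] at this
      exact this (mem_J.mpr ⟨x, by rw [pow_zero, one_mul]⟩)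
    · exact h
  have hmem : x ∈ J p A (k0 - 1) := by
    by_contra hc
    exact Nat.find_min hPn (by omega) hc
  obtain ⟨u, hu⟩ := mem_J.mp hmem
  refine ⟨k0 - 1, by omega, u, ?_, hu⟩
  by_contra hunit
  have humem : u ∈ Ideal.span {(p : A)} := by
    rw [← hmax]; exact notMem_maximalIdeal.not_right.mp (by simpa using hunit)
  obtain ⟨c, hc⟩ := Ideal.mem_span_singleton'.mp humem
  have : x ∈ J p A k0 := by
    refine mem_J.mpr ⟨c, ?_⟩
    have hps : (p : A) ^ (k0 - 1) * (p : A) = (p : A) ^ k0 := by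
      rw [← pow_succ]; congr 1; omega
    rw [hu, ← hc, ← hps]; ring
  exact Nat.find_spec hPn this

lemma ann_mem (hp : p.Prime) (hn : 0 < n) (hchar : CharP A (p ^ n))
    (hmax : maximalIdeal A = Ideal.span {(p : A)}) {k : ℕ} {x : A}
    (hx : (p : A) ^ k * x = 0) : x ∈ J p A (n - k) := by
  rcases eq_or_ne x 0 with rfl | hx0
  · exact zero_mem _
  obtain ⟨j, hj, u, hu, rfl⟩ := exists_decomp hp hn hchar hmax hx0
  have h0 : (p : A) ^ (k + j) * u = 0 := by rw [pow_add, mul_assoc]; exact hx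
  have hpow : (p : A) ^ (k + j) = 0 := by
    have h2 : (p : A) ^ (k + j) * u * (↑hu.unit⁻¹ : A) = 0 := by rw [h0, zero_mul]
    have h3 : u * (↑hu.unit⁻¹ : A) = 1 := by
      nth_rewrite 1 [← hu.unit_spec]; exact hu.unit.mul_inv
    rwa [mul_assoc, h3, mul_one] at h2
  have hnle : n ≤ k + j := (pcast_pow_eq_zero_iff hp hchar).mp hpow
  exact J_anti (by omega) (mem_J.mpr ⟨u, rfl⟩)

lemma pow_mul_unit_not_mem (hp : p.Prime) (hn : 0 < n) (hchar : CharP A (p ^ n))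
    (hmax : maximalIdeal A = Ideal.span {(p : A)}) {k : ℕ} (hk : k < n) {u : A}
    (hu : IsUnit u) : (p : A) ^ k * u ∉ J p A (k + 1) := by
  intro h
  obtain ⟨c, hc⟩ := mem_J.mp h
  have h0 : (p : A) ^ k * (u - p * c) = 0 := by
    rw [mul_sub, hc, pow_succ]; ring
  have h1 : u - p * c ∈ J p A 1 :=
    J_anti (by omega) (ann_mem hp hn hchar hmax h0)
  have humem : u ∈ Ideal.span {(p : A)} := by
    have hpc : (p : A) * c ∈ Ideal.span {(p : A)} :=
      Ideal.mem_span_singleton'.mpr ⟨c, mul_comm _ _⟩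
    have h1' : u - p * c ∈ Ideal.span {(p : A)} := by
      simpa [J, pow_one] using h1
    simpa using add_mem h1' hpc
  exact (notMem_maximalIdeal.mpr hu) (hmax ▸ humem)


section Card
variable {r : ℕ} [Fintype A]

lemma range_mulLeft (k : ℕ) :
    LinearMap.range (LinearMap.mulLeft A ((p : A) ^ k)) = J p A k := by
  ext x
  rw [LinearMap.mem_range, mem_J]
  constructor
  · rintro ⟨a, rfl⟩; exact ⟨a, rfl⟩
  · rintro ⟨a, rfl⟩; exact ⟨a, rfl⟩

lemma card_quot (hp : p.Prime) (hn : 0 < n) (hchar : CharP A (p ^ n))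
    (hmax : maximalIdeal A = Ideal.span {(p : A)})
    (hres : Nat.card (ResidueField A) = p ^ r) :
    ∀ k, k ≤ n → Nat.card (A ⧸ J p A k) = p ^ (k * r) := by
  intro k
  induction k with
  | zero =>
    intro _
    have : Subsingleton (A ⧸ J p A 0) :=
      Submodule.Quotient.subsingleton_iff.mpr J_zero_eq_top
    simp only [Nat.zero_mul, pow_zero]
    exact Nat.card_eq_one_iff_unique.mpr ⟨this, inferInstance⟩
  | succ k ih =>
    intro hk1
    have hk : k ≤ n := by omega
    set f : A →ₗ[A] A ⧸ J p A (k + 1) :=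
      (J p A (k + 1)).mkQ ∘ₗ LinearMap.mulLeft A ((p : A) ^ k) with hf
    have hker : LinearMap.ker f = J p A 1 := by
      ext x
      rw [LinearMap.mem_ker, hf, LinearMap.comp_apply, Submodule.mkQ_apply,
        Submodule.Quotient.mk_eq_zero, LinearMap.mulLeft_apply]
      constructor
      · intro hmem
        obtain ⟨c, hc⟩ := mem_J.mp hmem
        have h0 : (p : A) ^ k * (x - p * c) = 0 := by
          rw [mul_sub, hc, pow_succ]; ring
        have h1 : x - p * c ∈ J p A 1 :=
          J_anti (by omega) (ann_mem hp hn hchar hmax h0)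
        have h2 : (p : A) * c ∈ J p A 1 := mem_J.mpr ⟨c, by rw [pow_one]⟩
        simpa using add_mem h1 h2
      · intro hmem
        obtain ⟨c, hc⟩ := mem_J.mp hmem
        refine mem_J.mpr ⟨c, ?_⟩
        rw [hc, pow_one, pow_succ]; ring
    have hrange : LinearMap.range f = Submodule.map (J p A (k + 1)).mkQ (J p A k) := by
      rw [hf, LinearMap.range_comp, range_mulLeft]
    have hcard_range : Nat.card (Submodule.map (J p A (k + 1)).mkQ (J p A k)) = p ^ r := by
      have e := f.quotKerEquivRange
      rw [hker, hrange] at e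
      rw [← Nat.card_congr e.toEquiv]
      have hJ1 : J p A 1 = maximalIdeal A := by rw [hmax, J, pow_one]
      rw [hJ1]
      exact hres
    have hmul := Submodule.card_quotient_mul_card_quotient (J p A k) (J p A (k + 1))
      (J_anti (by omega))
    rw [hcard_range, ih hk] at hmul
    rw [← hmul, ← pow_add]
    congr 1
    ring
lemma card_J (hp : p.Prime) (hn : 0 < n) (hchar : CharP A (p ^ n))
    (hmax : maximalIdeal A = Ideal.span {(p : A)})
    (hres : Nat.card (ResidueField A) = p ^ r) (k : ℕ) (hk : k ≤ n) :
    Nat.card (J p A k) = p ^ ((n - k) * r) := by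
  have hA : Nat.card A = p ^ (n * r) := by
    have e := Submodule.quotEquivOfEqBot (J p A n) (J_n_eq_bot hp hchar)
    rw [← Nat.card_congr e.toEquiv, card_quot hp hn hchar hmax hres n le_rfl]
  have h1 := Submodule.card_eq_card_quotient_mul_card (J p A k)
  rw [hA, card_quot hp hn hchar hmax hres k hk] at h1
  have h2 : p ^ (n * r) = p ^ ((n - k) * r) * p ^ (k * r) := by
    rw [← pow_add]
    congr 1
    have hnk : (n - k) + k = n := by omega
    calc n * r = ((n - k) + k) * r := by rw [hnk]
    _ = (n - k) * r + k * r := by ring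
  rw [h2] at h1
  exact (Nat.eq_of_mul_eq_mul_right (pow_pos hp.pos _) h1).symm

lemma card_onePlusP_eq (hp : p.Prime) (hn : 0 < n) (hchar : CharP A (p ^ n)) :
    Nat.card (onePlusP p A) = Nat.card (J p A 1) := by
  have hunit : ∀ x : (J p A 1), IsUnit (1 + (x : A)) := by
    rintro ⟨x, hx⟩
    obtain ⟨a, ha⟩ := mem_J.mp hx
    have hnil : IsNilpotent x := ⟨n, by
      rw [ha, pow_one, mul_pow, (pcast_pow_eq_zero_iff hp hchar).mpr le_rfl, zero_mul]⟩
    exact hnil.isUnit_one_add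
  symm
  apply Nat.card_eq_of_bijective (fun x => (⟨(hunit x).unit, by
      obtain ⟨a, ha⟩ := mem_J.mp x.2
      exact ⟨a, by rw [IsUnit.unit_spec, ha, pow_one]⟩⟩ : onePlusP p A))
  constructor
  · rintro x y hxy
    have hco : 1 + (x : A) = 1 + (y : A) := by
      have h := congrArg (fun z : onePlusP p A => ((z : Aˣ) : A)) hxy
      simpa [IsUnit.unit_spec] using h
    exact Subtype.ext (add_left_cancel hco)
  · rintro ⟨u, hu⟩
    obtain ⟨a, ha⟩ := hu
    refine ⟨⟨(u : A) - 1, mem_J.mpr ⟨a, by rw [ha, pow_one]; ring⟩⟩, ?_⟩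
    apply Subtype.ext
    apply Units.ext
    simp [IsUnit.unit_spec]

end Card

section Exponent

lemma expand_pow (y : A) (p : ℕ) :
    (1 + y) ^ p = (∑ i ∈ Finset.range p, y ^ (i + 1) * (p.choose (i + 1) : A)) + 1 := by
  rw [add_comm (1 : A) y, add_pow, Finset.sum_range_succ']
  simp

lemma one_add_pow_p_sub_one_mem (hp : p.Prime) {k : ℕ} (hk : 1 ≤ k) {y : A}
    (hy : y ∈ J p A k) : (1 + y) ^ p - 1 ∈ J p A (k + 1) := by
  rw [expand_pow, add_sub_cancel_right]
  apply Submodule.sum_mem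
  intro i hi
  have hip : i + 1 ≤ p := Finset.mem_range.mp hi
  have h2le := hp.two_le
  rcases eq_or_lt_of_le hip with heq | hlt
  · have h1 : y ^ (i + 1) ∈ J p A (k * (i + 1)) := pow_mem_J hy
    have hle : k + 1 ≤ k * (i + 1) := by nlinarith
    exact Ideal.mul_mem_right _ _ (J_anti hle h1)
  · obtain ⟨m, hm⟩ := hp.dvd_choose_self (Nat.succ_ne_zero i) hlt
    have h1 : y ^ (i + 1) ∈ J p A k :=
      J_anti (Nat.le_mul_of_pos_right k (by omega)) (pow_mem_J hy)
    have h2 : ((p.choose (i + 1) : ℕ) : A) ∈ J p A 1 := by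
      rw [hm]; push_cast; exact mem_J.mpr ⟨m, by rw [pow_one]⟩
    exact mul_mem_J h1 h2

lemma one_add_pow_pow (hp : p.Prime) {y : A} (hy : y ∈ J p A 1) (j : ℕ) :
    (1 + y) ^ (p ^ j) - 1 ∈ J p A (j + 1) := by
  induction j with
  | zero => simpa using hy
  | succ j ih =>
    have h2 := one_add_pow_p_sub_one_mem hp (k := j + 1) (by omega) ih
    have hre : (1 : A) + ((1 + y) ^ (p ^ j) - 1) = (1 + y) ^ (p ^ j) := by ring
    rw [hre, ← pow_mul, ← pow_succ] at h2
    exact h2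

lemma onePlusP_pow_eq_one (hp : p.Prime) (hn : 0 < n) (hchar : CharP A (p ^ n))
    {u : Aˣ} (hu : u ∈ onePlusP p A) : u ^ (p ^ (n - 1)) = 1 := by
  obtain ⟨a, ha⟩ := hu
  have hy : (p : A) * a ∈ J p A 1 := mem_J.mpr ⟨a, by rw [pow_one]⟩
  have h := one_add_pow_pow hp hy (n - 1)
  rw [show (n - 1) + 1 = n by omega, J_n_eq_bot hp hchar, Submodule.mem_bot,
    sub_eq_zero] at h
  apply Units.ext
  rw [Units.val_pow_eq_pow_val, ha, h, Units.val_one]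

lemma torsion_mem (hp : p.Prime) (hn : 0 < n) (hchar : CharP A (p ^ n))
    (hmax : maximalIdeal A = Ideal.span {(p : A)})
    (hodd : Odd p ∨ (p = 2 ∧ n ≤ 2)) {u : Aˣ} (hu : u ∈ onePlusP p A)
    (h1 : u ^ p = 1) : (u : A) - 1 ∈ J p A (n - 1) := by
  obtain ⟨a, ha⟩ := hu
  have hy1 : (u : A) - 1 ∈ J p A 1 := mem_J.mpr ⟨a, by rw [ha, pow_one]; ring⟩
  rcases hodd with hodd | ⟨hp2, hn2⟩
  swap
  · exact J_anti (by omega) hy1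
  have hp3 : 3 ≤ p := by
    have h2le := hp.two_le
    have hne : p ≠ 2 := by rintro rfl; exact (Nat.not_odd_iff_even.mpr even_two) hodd
    omega
  set y := (u : A) - 1 with hydef
  rcases eq_or_ne y 0 with h0 | h0
  · rw [h0]; exact zero_mem _
  obtain ⟨k, hkn, v, hv, hyv⟩ := exists_decomp hp hn hchar hmax h0
  have hk1 : 1 ≤ k := by
    by_contra hcon
    have hnot := pow_mul_unit_not_mem hp hn hchar hmax hkn hv
    rw [← hyv] at hnot
    exact hnot (J_anti (by omega) hy1)
  by_cases hkbig : n - 1 ≤ k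
  · exact J_anti hkbig (mem_J.mpr ⟨v, hyv⟩)
  exfalso
  push_neg at hkbig
  have h1y : (1 + y) ^ p = 1 := by
    have hre : (1 : A) + y = (u : A) := by rw [hydef]; ring
    rw [hre, ← Units.val_pow_eq_pow_val, h1, Units.val_one]
  have hexp := expand_pow y p
  rw [h1y] at hexp
  have hpeel : (∑ i ∈ Finset.range p, y ^ (i + 1) * (p.choose (i + 1) : A)) =
      (∑ i ∈ Finset.range (p - 1), y ^ (i + 2) * (p.choose (i + 2) : A)) + y * (p : A) := by
    obtain ⟨q, hq⟩ : ∃ q, p = q + 1 := ⟨p - 1, by omega⟩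
    rw [hq]
    rw [Finset.sum_range_succ']
    simp [Nat.choose_one_right]
  rw [hpeel] at hexp
  have hzero : (∑ i ∈ Finset.range (p - 1), y ^ (i + 2) * (p.choose (i + 2) : A))
      + y * (p : A) = 0 := by linear_combination -hexp
  have hw : (∑ i ∈ Finset.range (p - 1), y ^ (i + 2) * (p.choose (i + 2) : A))
      ∈ J p A (k + 2) := by
    apply Submodule.sum_mem
    intro i hi
    have hip : i + 2 ≤ p := by have := Finset.mem_range.mp hi; omega
    have hyk : y ∈ J p A k := mem_J.mpr ⟨v, hyv⟩
    rcases eq_or_lt_of_le hip with heq | hlt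
    · have h1' : y ^ (i + 2) ∈ J p A (k * (i + 2)) := pow_mem_J hyk
      have h3 : 3 ≤ i + 2 := by omega
      have hle : k + 2 ≤ k * (i + 2) := by nlinarith
      exact Ideal.mul_mem_right _ _ (J_anti hle h1')
    · obtain ⟨m, hm⟩ := hp.dvd_choose_self (by omega) hlt
      have h1' : y ^ (i + 2) ∈ J p A (k + 1) := by
        refine J_anti ?_ (pow_mem_J hyk (m := i + 2))
        nlinarith
      have h2' : ((p.choose (i + 2) : ℕ) : A) ∈ J p A 1 := by
        rw [hm]; push_cast; exact mem_J.mpr ⟨m, by rw [pow_one]⟩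
      exact mul_mem_J (a := k + 1) (b := 1) h1' h2'
  have hyp2 : (p : A) ^ (k + 1) * v ∈ J p A (k + 1 + 1) := by
    have h2 : y * (p : A) = (p : A) ^ (k + 1) * v := by rw [hyv, pow_succ]; ring
    have hre : (p : A) ^ (k + 1) * v =
        -(∑ i ∈ Finset.range (p - 1), y ^ (i + 2) * (p.choose (i + 2) : A)) := by
      linear_combination hzero - h2
    rw [hre]
    have hkk : k + 1 + 1 = k + 2 := rfl
    rw [hkk]
    exact neg_mem hw
  exact pow_mul_unit_not_mem hp hn hchar hmax (show k + 1 < n by omega) hv hyp2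

end Exponent

end GaloisRingAux


open GaloisRingAux in
/-- **Structure of `1 + pA` for `p` odd or `p = 2, n ≤ 2`.** If `A = GR(p^n, r)` is a
Galois ring and `p` is odd, or `p = 2` and `n ≤ 2`, then the multiplicative group
`1 + pA` is isomorphic to the direct product of `r` copies of `ℤ/p^(n-1)ℤ`. -/
theorem onePlusP_structure_odd (p n r : ℕ) (hp : p.Prime) (hn : 0 < n) (hr : 0 < r)
    (A : Type) [CommRing A] [Fintype A] [IsLocalRing A]
    (hchar : CharP A (p ^ n))
    (hmax : IsLocalRing.maximalIdeal A = Ideal.span {(p : A)})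
    (hres : Nat.card (IsLocalRing.ResidueField A) = p ^ r)
    (hodd : Odd p ∨ (p = 2 ∧ n ≤ 2)) :
    Nonempty (onePlusP p A ≃* Multiplicative (Fin r → ZMod (p ^ (n - 1)))) := by
  classical
  rcases eq_or_lt_of_le (show 1 ≤ n from hn) with hn1 | hn2
  -- Case n = 1 : both groups are trivial
  · have hp0 : (p : A) = 0 := by
      have h := CharP.cast_eq_zero A (p ^ n)
      rw [← hn1, pow_one] at h
      exact_mod_cast h
    have huniq : ∀ u : onePlusP p A, u = 1 := by
      rintro ⟨u, a, haa⟩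
      apply Subtype.ext
      apply Units.ext
      rw [haa, hp0]
      simp
    haveI hU1 : Unique (onePlusP p A) := ⟨⟨1⟩, huniq⟩
    haveI hU2 : Unique (ZMod (p ^ (n - 1))) := by
      have hz : p ^ (n - 1) = 1 := by rw [← hn1]; simp
      rw [hz]
      infer_instance
    exact ⟨MulEquiv.ofUnique⟩
  -- Case n ≥ 2
  haveI : NeZero p := ⟨hp.ne_zero⟩
  obtain ⟨ι, hι, nn, hnn1, ⟨e⟩⟩ :=
    CommGroup.equiv_prod_multiplicative_zmod_of_finite (onePlusP p A)
  -- every element of `1 + pA` has order dividing `p ^ (n-1)`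
  have hg : ∀ g : onePlusP p A, g ^ (p ^ (n - 1)) = 1 := by
    intro g
    apply Subtype.ext
    rw [SubgroupClass.coe_pow, OneMemClass.coe_one]
    exact onePlusP_pow_eq_one hp hn hchar g.2
  -- hence each nn i divides p ^ (n-1)
  have hdvd : ∀ i : ι, nn i ∣ p ^ (n - 1) := by
    intro i
    set x : ∀ j, Multiplicative (ZMod (nn j)) :=
      Pi.mulSingle i (Multiplicative.ofAdd (1 : ZMod (nn i))) with hx
    have hx1 : x ^ (p ^ (n - 1)) = 1 := by
      have h := congrArg e (hg (e.symm x))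
      rw [map_pow, map_one, MulEquiv.apply_symm_apply] at h
      exact h
    have hcomp := congrFun hx1 i
    rw [Pi.pow_apply, hx, Pi.mulSingle_eq_same, Pi.one_apply] at hcomp
    have h0 : ((p ^ (n - 1) : ℕ) : ZMod (nn i)) = 0 := by
      have h := congrArg Multiplicative.toAdd hcomp
      simpa [toAdd_pow, nsmul_eq_mul] using h
    exact (ZMod.natCast_eq_zero_iff _ _).mp h0
  choose E hE1 hE2 using fun i => (Nat.dvd_prime_pow hp).mp (hdvd i)
  have hE0 : ∀ i, 1 ≤ E i := by
    intro i
    by_contra h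
    push_neg at h
    have h1 : nn i = 1 := by rw [hE2 i, Nat.lt_one_iff.mp h, pow_zero]
    have := hnn1 i
    omega
  -- cardinality count
  have hcardG : Nat.card (onePlusP p A) = p ^ ((n - 1) * r) := by
    rw [card_onePlusP_eq hp hn hchar, card_J hp hn hchar hmax hres 1 (by omega)]
  have hcard2 : Nat.card (onePlusP p A) = ∏ i, nn i := by
    rw [Nat.card_congr e.toEquiv, Nat.card_pi]
    congr 1
    funext i
    rw [Nat.card_congr (Multiplicative.ofAdd (α := ZMod (nn i))).symm]
    exact Nat.card_zmod _
  have hsum : ∑ i, E i = (n - 1) * r := by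
    have hpp : p ^ ((n - 1) * r) = p ^ (∑ i, E i) := by
      rw [← hcardG, hcard2]
      simp_rw [hE2]
      rw [Finset.prod_pow_eq_pow_sum]
    exact (Nat.pow_right_injective hp.two_le hpp).symm
  -- torsion bound : card ι ≤ r
  have hT : Nat.card {g : onePlusP p A // g ^ p = 1} ≤ p ^ r := by
    have hinj : Function.Injective (fun w : {g : onePlusP p A // g ^ p = 1} =>
        (⟨((w.1 : Aˣ) : A) - 1, torsion_mem hp hn hchar hmax hodd w.1.2 (by
          have h := congrArg (fun g : onePlusP p A => (g : Aˣ)) w.2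
          simpa using h)⟩ : J p A (n - 1))) := by
      rintro w w' hww
      apply Subtype.ext
      apply Subtype.ext
      apply Units.ext
      have h : ((w.1 : Aˣ) : A) - 1 = ((w'.1 : Aˣ) : A) - 1 := congrArg Subtype.val hww
      exact sub_left_injective h
    calc Nat.card {g : onePlusP p A // g ^ p = 1}
        ≤ Nat.card (J p A (n - 1)) := Nat.card_le_card_of_injective _ hinj
      _ = p ^ ((n - (n - 1)) * r) := card_J hp hn hchar hmax hres (n - 1) (by omega)
      _ = p ^ r := by
          have hh : n - (n - 1) = 1 := by omega
          rw [hh, one_mul]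
  have hΦcard : p ^ (Fintype.card ι) ≤ Nat.card {g : onePlusP p A // g ^ p = 1} := by
    set Φ : (ι → ZMod p) → ∀ j, Multiplicative (ZMod (nn j)) := fun f j =>
      Multiplicative.ofAdd (((f j).val * p ^ (E j - 1) : ℕ) : ZMod (nn j)) with hΦ
    have hΦtor : ∀ f, (Φ f) ^ p = 1 := by
      intro f
      funext j
      rw [Pi.pow_apply, Pi.one_apply, hΦ]
      dsimp only
      rw [← ofAdd_nsmul]
      have hnat : p * ((f j).val * p ^ (E j - 1)) = (f j).val * nn j := by
        rw [hE2 j]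
        have he : (E j - 1) + 1 = E j := by have := hE0 j; omega
        calc p * ((f j).val * p ^ (E j - 1)) = (f j).val * (p ^ (E j - 1) * p) := by ring
          _ = (f j).val * p ^ ((E j - 1) + 1) := by rw [pow_succ]
          _ = (f j).val * p ^ (E j) := by rw [he]
      have hc : p • (((f j).val * p ^ (E j - 1) : ℕ) : ZMod (nn j)) = 0 := by
        rw [nsmul_eq_mul, ← Nat.cast_ofNat (n := 2)] at *
        rw [show ((p : ℕ) : ZMod (nn j)) * (((f j).val * p ^ (E j - 1) : ℕ) : ZMod (nn j))
            = ((p * ((f j).val * p ^ (E j - 1)) : ℕ) : ZMod (nn j)) from (Nat.cast_mul _ _).symm]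
        rw [hnat, Nat.cast_mul, ZMod.natCast_self, mul_zero]
      rw [hc, ofAdd_zero]
    have hΦinj : Function.Injective Φ := by
      intro f f' hff
      funext j
      have hj := congrFun hff j
      rw [hΦ] at hj
      dsimp only at hj
      have hj2 : (((f j).val * p ^ (E j - 1) : ℕ) : ZMod (nn j))
          = (((f' j).val * p ^ (E j - 1) : ℕ) : ZMod (nn j)) :=
        congrArg Multiplicative.toAdd hj
      rw [ZMod.natCast_eq_natCast_iff] at hj2
      have hmod : nn j = p * p ^ (E j - 1) := by
        have he : (E j - 1) + 1 = E j := by have := hE0 j; omega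
        rw [hE2 j]
        conv_lhs => rw [← he]
        rw [pow_succ]
        ring
      rw [hmod] at hj2
      have hj3 : (f j).val ≡ (f' j).val [MOD p] :=
        Nat.ModEq.mul_right_cancel' (pow_pos hp.pos _).ne' hj2
      have hlt1 : (f j).val < p := ZMod.val_lt (f j)
      have hlt2 : (f' j).val < p := ZMod.val_lt (f' j)
      have hval : (f j).val = (f' j).val := by
        have h := hj3
        unfold Nat.ModEq at h
        rwa [Nat.mod_eq_of_lt hlt1, Nat.mod_eq_of_lt hlt2] at h
      exact ZMod.val_injective p hval
    set Φ' : (ι → ZMod p) → {g : onePlusP p A // g ^ p = 1} := fun f =>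
      ⟨e.symm (Φ f), by rw [← map_pow, hΦtor f, map_one]⟩ with hΦ'
    have hΦ'inj : Function.Injective Φ' := by
      intro f f' h
      apply hΦinj
      apply e.symm.injective
      exact congrArg Subtype.val h
    calc p ^ (Fintype.card ι) = Nat.card (ι → ZMod p) := by
          rw [Nat.card_fun, Nat.card_zmod, Nat.card_eq_fintype_card]
      _ ≤ Nat.card {g : onePlusP p A // g ^ p = 1} :=
          Nat.card_le_card_of_injective Φ' hΦ'inj
  have hcardι : Fintype.card ι ≤ r :=
    (Nat.pow_le_pow_iff_right hp.one_lt).mp (le_trans hΦcard hT)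
  have hsum_le : ∑ i, E i ≤ (n - 1) * Fintype.card ι := by
    calc ∑ i, E i ≤ ∑ _i : ι, (n - 1) := Finset.sum_le_sum (fun i _ => hE1 i)
      _ = (n - 1) * Fintype.card ι := by
          rw [Finset.sum_const, smul_eq_mul, Finset.card_univ, mul_comm]
  have hciota : Fintype.card ι = r := by
    have h1 : (n - 1) * r ≤ (n - 1) * Fintype.card ι := hsum ▸ hsum_le
    have h2 : r ≤ Fintype.card ι := Nat.le_of_mul_le_mul_left h1 (by omega)
    omega
  have hEeq : ∀ i ∈ Finset.univ, E i = n - 1 := by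
    apply (Finset.sum_eq_sum_iff_of_le (fun i _ => hE1 i)).mp
    rw [hsum, Finset.sum_const, smul_eq_mul, Finset.card_univ, hciota, mul_comm]
  have hnn : ∀ i, nn i = p ^ (n - 1) := fun i => by
    rw [hE2 i, hEeq i (Finset.mem_univ i)]
  refine ⟨e.trans ?_⟩
  exact (MulEquiv.piCongrRight (fun i =>
      AddEquiv.toMultiplicative (ZMod.ringEquivCongr (hnn i)).toAddEquiv)).trans
    ((MulEquiv.arrowCongr (Fintype.equivFinOfCardEq hciota)
        (MulEquiv.refl (Multiplicative (ZMod (p ^ (n - 1)))))).trans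
      (MulEquiv.piMultiplicative (fun _ : Fin r => ZMod (p ^ (n - 1)))).symm)
end

section
/- Let A be a Galois ring GR(2^n, r) with n ≥ 3. Then the multiplicative group 1 + 2A is isomorphic as a group to ℤ/2ℤ × ℤ/2^{n−2}ℤ × (ℤ/2^{n−1}ℤ)^{r−1}. -/
open Set IsLocalRing Ideal
open scoped Finset

theorem MulEquiv.card_range_pow {G H : Type*} [Monoid G] [Monoid H] (e : G ≃* H) (d : ℕ) :
    Nat.card (range fun x : G => x ^ d) = Nat.card (range fun y : H => y ^ d) := by
  have : (range fun y : H => y ^ d) = e '' range fun x : G => x ^ d := by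
    rw [← range_comp, ← e.surjective.range_comp]
    simp only [Function.comp_def, map_pow]
  rw [this, Nat.card_image_of_injective e.injective]

theorem card_range_pow_multiplicative (α : Type*) [AddMonoid α] (d : ℕ) :
    Nat.card (range fun x : Multiplicative α => x ^ d) = Nat.card (range fun x : α => d • x) :=
  rfl

theorem card_range_nsmul_prod {M N : Type*} [AddMonoid M] [AddMonoid N] (d : ℕ) :
    Nat.card (range fun x : M × N => d • x) =
      Nat.card (range fun x : M => d • x) * Nat.card (range fun y : N => d • y) := by
  rw [show (fun x : M × N => d • x) = Prod.map (d • ·) (d • ·) from rfl, range_prodMap,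
    Nat.card_congr (Equiv.Set.prod _ _), Nat.card_prod]

theorem card_range_nsmul_pi {ι : Type*} [Fintype ι] {M : ι → Type*} [∀ i, AddMonoid (M i)]
    (d : ℕ) :
    Nat.card (range fun x : (∀ i, M i) => d • x) = ∏ i, Nat.card (range fun x : M i => d • x) := by
  rw [show (fun x : ∀ i, M i => d • x) = Pi.map fun i (x : M i) => d • x from rfl, range_piMap,
    Nat.card_congr (Equiv.Set.univPi _), Nat.card_pi]

theorem ZMod.card_range_pow_nsmul {p : ℕ} (hp : 0 < p) (e k : ℕ) :
    Nat.card (range fun x : ZMod (p ^ e) => p ^ k • x) = p ^ (e - k) := by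
  have : NeZero (p ^ e) := ⟨by positivity⟩
  have h := IsAddCyclic.card_nsmulAddMonoidHom_range (ZMod (p ^ e)) (p ^ k)
  rw [Nat.card_zmod] at h
  refine (h : Nat.card (range fun x : ZMod (p ^ e) => p ^ k • x) = _).trans ?_
  rcases le_total e k with hek | hke
  · rw [Nat.gcd_eq_left (Nat.pow_dvd_pow p hek), Nat.div_self (by positivity),
      Nat.sub_eq_zero_of_le hek, pow_zero]
  · rw [Nat.gcd_eq_right (Nat.pow_dvd_pow p hke), Nat.pow_div hke hp]

theorem card_range_pow_nsmul_pi_zmod {p : ℕ} (hp : 0 < p) {ι : Type*} [Fintype ι] (e : ι → ℕ)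
    (k : ℕ) :
    Nat.card (range fun x : (∀ i, ZMod (p ^ e i)) => p ^ k • x) = p ^ ∑ i, (e i - k) := by
  simp only [card_range_nsmul_pi, ZMod.card_range_pow_nsmul hp, Finset.prod_pow_eq_pow_sum]

theorem sum_tsub_add_sum_tsub_add_two {ι : Type*} [Fintype ι] (e : ι → ℕ) (k : ℕ) :
    ∑ i, (e i - k) + ∑ i, (e i - (k + 2)) =
      2 * ∑ i, (e i - (k + 1)) + #{i | e i = k + 1} := by
  rw [Finset.card_filter, Finset.mul_sum, ← Finset.sum_add_distrib, ← Finset.sum_add_distrib]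
  refine Finset.sum_congr rfl fun i _ => ?_
  split_ifs <;> omega

theorem exists_equiv_comp_eq_of_sum_tsub_eq {ι κ : Type*} [Fintype ι] [Fintype κ]
    {e : ι → ℕ} {f : κ → ℕ} (he : ∀ i, 0 < e i) (hf : ∀ j, 0 < f j)
    (h : ∀ k, ∑ i, (e i - k) = ∑ j, (f j - k)) : ∃ σ : ι ≃ κ, ∀ i, f (σ i) = e i := by
  have hfiber (v : ℕ) : Fintype.card {i // e i = v} = Fintype.card {j // f j = v} := by
    rw [Fintype.card_subtype, Fintype.card_subtype]
    rcases v with _ | k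
    · simp [(he _).ne', (hf _).ne']
    · have he' := sum_tsub_add_sum_tsub_add_two e k
      have hf' := sum_tsub_add_sum_tsub_add_two f k
      rw [h, h, h] at he'
      omega
  exact ⟨Equiv.ofFiberEquiv fun v => Fintype.equivOfCardEq (hfiber v),
    Equiv.ofFiberEquiv_map _⟩

theorem IsPGroup.exists_mulEquiv_multiplicative_pi_zmod {p : ℕ} [hp : Fact p.Prime] {G : Type*}
    [CommGroup G] [Finite G] (hG : IsPGroup p G) :
    ∃ (ι : Type) (_ : Fintype ι) (e : ι → ℕ),
      (∀ i, 0 < e i) ∧ Nonempty (G ≃* Multiplicative (∀ i, ZMod (p ^ e i))) := by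
  obtain ⟨ι, _, N, hN, ⟨φ⟩⟩ := CommGroup.equiv_prod_multiplicative_zmod_of_finite G
  obtain ⟨m, hm⟩ := IsPGroup.iff_card.1 hG
  have hdvd (i : ι) : N i ∣ p ^ m := by
    have hcard (j : ι) : Nat.card (Multiplicative (ZMod (N j))) = N j := Nat.card_zmod (N j)
    rw [← hm, Nat.card_congr φ.toEquiv, Nat.card_pi]
    simpa only [hcard] using Finset.dvd_prod_of_mem N (Finset.mem_univ i)
  choose e _ he using fun i => (Nat.dvd_prime_pow hp.out).1 (hdvd i)
  refine ⟨ι, inferInstance, e, fun i => Nat.pos_of_ne_zero fun h0 => ?_,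
    ⟨φ.trans <| (MulEquiv.piMultiplicative _).symm.trans <| AddEquiv.toMultiplicative <|
      (RingEquiv.piCongrRight fun i => ZMod.ringEquivCongr (he i)).toAddEquiv⟩⟩
  have := hN i
  rw [he i, h0, pow_zero] at this
  exact this.false

theorem IsPGroup.nonempty_mulEquiv_of_card_range_pow_eq {p : ℕ} [hp : Fact p.Prime]
    {G H : Type*} [CommGroup G] [CommGroup H] [Finite G] [Finite H] (hG : IsPGroup p G)
    (h : ∀ k, Nat.card (range fun x : G => x ^ p ^ k) = Nat.card (range fun y : H => y ^ p ^ k)) :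
    Nonempty (G ≃* H) := by
  have hH : IsPGroup p H := by
    obtain ⟨m, hm⟩ := IsPGroup.iff_card.1 hG
    refine IsPGroup.of_card (n := m) ?_
    simpa [hm] using (h 0).symm
  obtain ⟨ι, _, e, he, ⟨φ⟩⟩ := hG.exists_mulEquiv_multiplicative_pi_zmod
  obtain ⟨κ, _, f, hf, ⟨ψ⟩⟩ := hH.exists_mulEquiv_multiplicative_pi_zmod
  have hsum (k : ℕ) : ∑ i, (e i - k) = ∑ j, (f j - k) := by
    apply Nat.pow_right_injective hp.out.two_le
    simp only [← card_range_pow_nsmul_pi_zmod hp.out.pos, ← card_range_pow_multiplicative,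
      ← φ.card_range_pow, ← ψ.card_range_pow, h]
  obtain ⟨σ, hσ⟩ := exists_equiv_comp_eq_of_sum_tsub_eq he hf hsum
  let reindex : (∀ i, ZMod (p ^ e i)) ≃+* ∀ j, ZMod (p ^ f j) :=
    (RingEquiv.piCongrRight fun i => ZMod.ringEquivCongr (by rw [hσ i])).trans
      (RingEquiv.piCongrLeft (fun j => ZMod (p ^ f j)) σ)
  exact ⟨φ.trans <| reindex.toAddEquiv.toMultiplicative.trans ψ.symm⟩

theorem AddMonoidHom.card_image_mul_card_ker {G H : Type*} [AddGroup G] [AddGroup H] [Finite G]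
    (f : G →+ H) {s : Set G} (hs : ∀ x ∈ s, ∀ y ∈ f.ker, x + y ∈ s) :
    Nat.card (f '' s) * Nat.card f.ker = Nat.card s := by
  let π : G → G ⧸ f.ker := QuotientAddGroup.mk
  have hsat : π ⁻¹' (π '' s) = s := by
    refine Subset.antisymm ?_ (subset_preimage_image π s)
    rintro x ⟨a, ha, hax⟩
    simpa using hs a ha _ (QuotientAddGroup.eq.1 hax)
  have himage : f '' s = QuotientAddGroup.kerLift f '' (π '' s) := by
    rw [image_image]; rfl
  rw [himage, Nat.card_image_of_injective (QuotientAddGroup.kerLift_injective f), mul_comm,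
    ← Nat.card_prod, ← Nat.card_congr (QuotientAddGroup.preimageMkEquivAddSubgroupProdSet _ _),
    hsat]

theorem pos_of_forall_pow_eq_zero_iff {M : Type*} [MonoidWithZero M] [Nontrivial M] {ϖ : M}
    {n : ℕ} (hϖ : ∀ m, ϖ ^ m = 0 ↔ n ≤ m) : 0 < n :=
  Nat.pos_of_ne_zero fun h => one_ne_zero (pow_zero ϖ ▸ (hϖ 0).2 h.le)

namespace IsLocalRing

variable {A : Type*} [CommRing A] [IsLocalRing A] {ϖ : A}

theorem isUnit_of_not_dvd (hmax : maximalIdeal A = span {ϖ}) {x : A} (hx : ¬ϖ ∣ x) :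
    IsUnit x := by
  by_contra h
  exact hx (mem_span_singleton.1 (hmax ▸ (mem_maximalIdeal x).2 h))

theorem isUnit_one_add_of_dvd (hmax : maximalIdeal A = span {ϖ}) {y : A} (hy : ϖ ∣ y) :
    IsUnit (1 + y) := by
  refine isUnit_of_not_dvd hmax fun h => ?_
  have hϖ : ϖ ∈ maximalIdeal A := hmax ▸ mem_span_singleton_self ϖ
  exact hϖ (isUnit_of_dvd_one (by simpa using dvd_sub h hy))

theorem exists_eq_pow_mul_unit {n : ℕ} (hmax : maximalIdeal A = span {ϖ}) (hϖ : ϖ ^ n = 0)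
    {x : A} (hx : x ≠ 0) : ∃ j u, IsUnit u ∧ x = ϖ ^ j * u := by
  classical
  have hex : ∃ j, ¬ϖ ^ (j + 1) ∣ x :=
    ⟨n, fun ⟨c, hc⟩ => hx (by rw [hc, pow_succ, hϖ, zero_mul, zero_mul])⟩
  obtain ⟨j, hj, hmin⟩ : ∃ j, ¬ϖ ^ (j + 1) ∣ x ∧ ∀ i < j, ϖ ^ (i + 1) ∣ x :=
    ⟨Nat.find hex, Nat.find_spec hex, fun i hi => not_not.1 (Nat.find_min hex hi)⟩
  have hdvd : ϖ ^ j ∣ x := by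
    rcases j with _ | i
    · exact pow_zero ϖ ▸ one_dvd x
    · exact hmin i (Nat.lt_succ_self i)
  obtain ⟨u, rfl⟩ := hdvd
  refine ⟨j, u, isUnit_of_not_dvd hmax fun ⟨c, hc⟩ => hj ⟨c, ?_⟩, rfl⟩
  rw [hc, pow_succ, mul_assoc]

theorem pow_mul_eq_zero_iff_dvd {n k : ℕ} (hmax : maximalIdeal A = span {ϖ})
    (hϖ : ∀ m, ϖ ^ m = 0 ↔ n ≤ m) (hk : k ≤ n) {x : A} :
    ϖ ^ k * x = 0 ↔ ϖ ^ (n - k) ∣ x := by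
  constructor
  · intro h
    rcases eq_or_ne x 0 with rfl | hx
    · exact dvd_zero _
    obtain ⟨j, u, hu, rfl⟩ := exists_eq_pow_mul_unit hmax ((hϖ n).2 le_rfl) hx
    have hkj : ϖ ^ (k + j) = 0 := by rw [pow_add, ← hu.mul_left_eq_zero, mul_assoc, h]
    exact (pow_dvd_pow ϖ (by have := (hϖ _).1 hkj; omega)).mul_right u
  · rintro ⟨c, rfl⟩
    rw [← mul_assoc, ← pow_add, Nat.add_sub_cancel' hk, (hϖ n).2 le_rfl, zero_mul]

theorem ker_mulLeft_pow {n k : ℕ} (hmax : maximalIdeal A = span {ϖ})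
    (hϖ : ∀ m, ϖ ^ m = 0 ↔ n ≤ m) (hk : k ≤ n) :
    (AddMonoidHom.mulLeft (ϖ ^ k)).ker = (span {ϖ ^ (n - k)}).toAddSubgroup := by
  ext x
  simpa [mem_span_singleton] using pow_mul_eq_zero_iff_dvd hmax hϖ hk (x := x)

theorem ker_residue_toAddMonoidHom :
    (residue A).toAddMonoidHom.ker = (maximalIdeal A).toAddSubgroup := by
  ext x
  simp

variable [Finite A]

theorem card_eq_card_residueField_mul_card_maximalIdeal :
    Nat.card A = Nat.card (ResidueField A) * Nat.card (maximalIdeal A) := by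
  have h := (residue A).toAddMonoidHom.card_image_mul_card_ker (s := univ) (by simp)
  have hsurj : Function.Surjective (residue A).toAddMonoidHom := residue_surjective
  rw [image_univ_of_surjective hsurj, Nat.card_univ, ker_residue_toAddMonoidHom] at h
  rw [← Nat.card_univ, ← h]
  rfl

theorem card_span_pow_eq_card_span_pow_succ_mul {n j : ℕ} (hmax : maximalIdeal A = span {ϖ})
    (hϖ : ∀ m, ϖ ^ m = 0 ↔ n ≤ m) (hj : j < n) :
    Nat.card (span {ϖ ^ j}) = Nat.card (span {ϖ ^ (j + 1)}) * Nat.card (span {ϖ ^ (n - 1)}) := by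
  have hker := ker_mulLeft_pow hmax hϖ (by omega : 1 ≤ n)
  have himage : AddMonoidHom.mulLeft (ϖ ^ 1) '' (span {ϖ ^ j} : Set A) = span {ϖ ^ (j + 1)} := by
    ext x
    simp only [mem_image, SetLike.mem_coe, mem_span_singleton, AddMonoidHom.coe_mulLeft, pow_one]
    constructor
    · rintro ⟨y, hy, rfl⟩; exact pow_succ' ϖ j ▸ mul_dvd_mul_left ϖ hy
    · rintro ⟨c, rfl⟩; exact ⟨ϖ ^ j * c, dvd_mul_right _ _, by ring⟩
  have h := (AddMonoidHom.mulLeft (ϖ ^ 1)).card_image_mul_card_ker (s := (span {ϖ ^ j} : Set A))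
    fun x hx y hy => by
      rw [hker] at hy
      exact add_mem hx ((span_singleton_le_span_singleton.2 (pow_dvd_pow ϖ (by omega))) hy)
  rw [himage, hker] at h
  exact h.symm

theorem card_span_pow {n j : ℕ} (hmax : maximalIdeal A = span {ϖ})
    (hϖ : ∀ m, ϖ ^ m = 0 ↔ n ≤ m) (hj : j ≤ n) :
    Nat.card (span {ϖ ^ j}) = Nat.card (ResidueField A) ^ (n - j) := by
  have hn := pos_of_forall_pow_eq_zero_iff hϖ
  have hsocle : Nat.card (span {ϖ ^ (n - 1)}) = Nat.card (ResidueField A) := by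
    have h := card_span_pow_eq_card_span_pow_succ_mul hmax hϖ hn
    rw [pow_zero, span_singleton_one, Nat.card_congr Submodule.topEquiv.toEquiv,
      card_eq_card_residueField_mul_card_maximalIdeal, hmax, zero_add, pow_one, mul_comm] at h
    exact (Nat.eq_of_mul_eq_mul_left Nat.card_pos h).symm
  obtain ⟨i, hi, rfl⟩ : ∃ i ≤ n, j = n - i := ⟨n - j, by omega, by omega⟩
  rw [Nat.sub_sub_self hi]
  clear hj
  induction i with
  | zero => simp [(hϖ n).2 le_rfl]
  | succ i ih =>
    rw [card_span_pow_eq_card_span_pow_succ_mul hmax hϖ (by omega), hsocle,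
      show n - (i + 1) + 1 = n - i by omega, ih (by omega), pow_succ]

theorem card_eq_card_residueField_pow {n : ℕ} (hmax : maximalIdeal A = span {ϖ})
    (hϖ : ∀ m, ϖ ^ m = 0 ↔ n ≤ m) : Nat.card A = Nat.card (ResidueField A) ^ n := by
  have h := card_span_pow hmax hϖ n.zero_le
  rwa [pow_zero, span_singleton_one, Nat.card_congr Submodule.topEquiv.toEquiv, Nat.sub_zero] at h

end IsLocalRing

theorem CharP.natCast_pow_eq_zero_iff {R : Type*} [Semiring R] {p n : ℕ} [CharP R (p ^ n)]
    (hp : 1 < p) (m : ℕ) : (p : R) ^ m = 0 ↔ n ≤ m := by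
  rw [← Nat.cast_pow, CharP.cast_eq_zero_iff R (p ^ n), Nat.pow_dvd_pow_iff_le_right hp]

section MaximalIdealTwo

variable {A : Type} [CommRing A] [IsLocalRing A]

theorem card_range_pow_onePlusP_two (hmax : maximalIdeal A = span {2}) (k : ℕ) :
    Nat.card (range fun x : onePlusP 2 A => x ^ 2 ^ k) =
      Nat.card (range fun a : A => (1 + 2 * a) ^ 2 ^ k) := by
  let ι : onePlusP 2 A → A := fun x => ((x : Aˣ) : A)
  have hι : Function.Injective ι := fun x y h => Subtype.ext (Units.ext h)
  have hrange : range ι = range fun a : A => 1 + 2 * a := by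
    ext y
    constructor
    · rintro ⟨⟨u, a, ha⟩, rfl⟩
      exact ⟨a, by simpa using ha.symm⟩
    · rintro ⟨a, rfl⟩
      exact ⟨⟨(isUnit_one_add_of_dvd hmax (dvd_mul_right 2 a)).unit, a, by simp⟩, rfl⟩
  rw [← Nat.card_image_of_injective hι, ← range_comp]
  calc Nat.card (range (ι ∘ fun x : onePlusP 2 A => x ^ 2 ^ k))
      = Nat.card ((· ^ 2 ^ k) '' range ι) := by
        rw [← range_comp]; rfl
    _ = _ := by rw [hrange, ← range_comp]; rfl

variable [Finite A]

theorem add_mem_range_add_sq (hmax : maximalIdeal A = span {2}) {s y : A}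
    (hs : s ∈ range fun a : A => a + a ^ 2) (hy : (2 : A) ∣ y) :
    s + y ∈ range fun a : A => a + a ^ 2 := by
  obtain ⟨a, rfl⟩ := hs
  obtain ⟨c, rfl⟩ := hy
  -- Hensel: `(a + 2x) + (a + 2x)^2 = a + a^2 + 2 * (x * (1 + 2 * (a + x)))`, and the map
  -- `x ↦ x * (1 + 2 * (a + x))` is injective, hence onto on the finite ring `A`.
  have hinj : Function.Injective fun x : A => x * (1 + 2 * (a + x)) := by
    intro x y hxy
    have h : (x - y) * (1 + 2 * (a + x + y)) = 0 := by
      dsimp only at hxy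
      linear_combination hxy
    exact sub_eq_zero.1 ((isUnit_one_add_of_dvd hmax (dvd_mul_right 2 _)).mul_left_eq_zero.1 h)
  obtain ⟨x, hx⟩ := Finite.injective_iff_surjective.1 hinj c
  exact ⟨a + 2 * x, by rw [← hx]; ring⟩

theorem card_range_add_sq_mul_two (hmax : maximalIdeal A = span {2}) :
    Nat.card (range fun a : A => a + a ^ 2) * 2 = Nat.card A := by
  have h2 : (2 : ResidueField A) = 0 := by
    rw [← map_ofNat (residue A) 2, residue_eq_zero_iff, hmax]
    exact mem_span_singleton_self 2
  let artinSchreier : ResidueField A →+ ResidueField A :=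
    { toFun := fun x => x + x ^ 2
      map_zero' := by simp
      map_add' := fun x y => by linear_combination x * y * h2 }
  have hker : (artinSchreier.ker : Set (ResidueField A)) = {0, 1} := by
    ext x
    have : x + x ^ 2 = x * (x - 1) := by linear_combination x * h2
    simp [artinSchreier, this, sub_eq_zero]
  have : Finite (ResidueField A) := Finite.of_surjective _ residue_surjective
  have hk := artinSchreier.card_image_mul_card_ker (s := univ) (by simp)
  rw [← SetLike.coe_sort_coe, hker, Nat.card_coe_set_eq {0, 1}, ncard_pair zero_ne_one,
    Nat.card_univ] at hk
  have hS := (residue A).toAddMonoidHom.card_image_mul_card_ker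
    (s := range fun a : A => a + a ^ 2) fun x hx y hy => add_mem_range_add_sq hmax hx <| by
      rw [ker_residue_toAddMonoidHom, Submodule.mem_toAddSubgroup, hmax] at hy
      exact mem_span_singleton.1 hy
  have himage : (residue A).toAddMonoidHom '' (range fun a : A => a + a ^ 2) = artinSchreier '' univ := by
    rw [← range_comp, image_univ, ← residue_surjective.range_comp]
    congr 1
  calc Nat.card (range fun a : A => a + a ^ 2) * 2
      = Nat.card (artinSchreier '' univ) * 2 * Nat.card (maximalIdeal A) := by
        rw [← hS, himage, ker_residue_toAddMonoidHom, mul_right_comm]; rfl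
    _ = Nat.card A := by rw [hk, card_eq_card_residueField_mul_card_maximalIdeal (A := A)]

theorem image_add_two_pow_mul_sq_range_add_sq (hmax : maximalIdeal A = span {2}) {k : ℕ}
    (hk : 1 ≤ k) :
    (fun s : A => s + 2 ^ k * s ^ 2) '' (range fun a : A => a + a ^ 2) =
      range fun a : A => a + a ^ 2 := by
  have h2 : (2 : A) ∣ 2 ^ k := dvd_pow_self 2 (by omega)
  have hinj : Function.Injective fun s : A => s + 2 ^ k * s ^ 2 := by
    intro x y hxy
    have h : (x - y) * (1 + 2 ^ k * (x + y)) = 0 := by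
      dsimp only at hxy
      linear_combination hxy
    exact sub_eq_zero.1 ((isUnit_one_add_of_dvd hmax (h2.mul_right _)).mul_left_eq_zero.1 h)
  refine eq_of_subset_of_ncard_le ?_ (ncard_image_of_injective _ hinj).ge
  rintro _ ⟨s, hs, rfl⟩
  exact add_mem_range_add_sq hmax hs (h2.mul_right _)

theorem range_one_add_two_mul_pow_two_pow (hmax : maximalIdeal A = span {2}) {k : ℕ}
    (hk : 1 ≤ k) :
    (range fun a : A => (1 + 2 * a) ^ 2 ^ k) =
      (fun s => 1 + 2 ^ (k + 1) * s) '' range fun a : A => a + a ^ 2 := by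
  induction k, hk using Nat.le_induction with
  | base =>
    rw [← range_comp]
    congr 1
    funext a
    simp only [Function.comp_apply]
    ring
  | succ k hk ih =>
    calc (range fun a : A => (1 + 2 * a) ^ 2 ^ (k + 1))
        = (· ^ 2) '' range fun a : A => (1 + 2 * a) ^ 2 ^ k := by
          rw [← range_comp]
          simp only [Function.comp_def, pow_succ, pow_mul]
      _ = (fun s => 1 + 2 ^ (k + 2) * s) ''
            ((fun s : A => s + 2 ^ k * s ^ 2) '' range fun a : A => a + a ^ 2) := by
          rw [ih, image_image, image_image]
          congr 1
          funext s
          ring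
      _ = _ := by rw [image_add_two_pow_mul_sq_range_add_sq hmax hk]

theorem card_image_two_pow_mul_range_add_sq_mul {n j : ℕ} (hmax : maximalIdeal A = span {2})
    (h2 : ∀ m, (2 : A) ^ m = 0 ↔ n ≤ m) (hj : j < n) :
    Nat.card ((fun s : A => 2 ^ j * s) '' range fun a : A => a + a ^ 2) *
      Nat.card (span {(2 : A) ^ (n - j)}) = Nat.card (range fun a : A => a + a ^ 2) := by
  have hker := ker_mulLeft_pow hmax h2 hj.le
  have h := (AddMonoidHom.mulLeft (2 ^ j)).card_image_mul_card_ker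
    (s := range fun a : A => a + a ^ 2) fun x hx y hy => by
      rw [hker, Submodule.mem_toAddSubgroup, mem_span_singleton] at hy
      exact add_mem_range_add_sq hmax hx ((dvd_pow_self 2 (by omega)).trans hy)
  rwa [hker] at h

theorem card_onePlusP_two {n r : ℕ} (hmax : maximalIdeal A = span {2})
    (h2 : ∀ m, (2 : A) ^ m = 0 ↔ n ≤ m) (hres : Nat.card (ResidueField A) = 2 ^ r) :
    Nat.card (onePlusP 2 A) = 2 ^ ((n - 1) * r) := by
  have hrange : range (2 * · : A → A) = (span {(2 : A) ^ 1} : Set A) := by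
    ext x
    simp only [mem_range, SetLike.mem_coe, pow_one, mem_span_singleton]
    exact ⟨fun ⟨c, hc⟩ => ⟨c, hc.symm⟩, fun ⟨c, hc⟩ => ⟨c, hc.symm⟩⟩
  have h := card_range_pow_onePlusP_two hmax 0
  simp only [pow_zero, pow_one, range_id', Nat.card_univ] at h
  rw [h, show (fun a : A => 1 + 2 * a) = (1 + ·) ∘ (2 * ·) from rfl, range_comp,
    Nat.card_image_of_injective (add_right_injective 1), hrange, SetLike.coe_sort_coe,
    card_span_pow hmax h2 (pos_of_forall_pow_eq_zero_iff h2), hres, ← pow_mul, mul_comm]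

theorem card_range_pow_onePlusP_two_of_pos {n r k : ℕ} (hmax : maximalIdeal A = span {2})
    (h2 : ∀ m, (2 : A) ^ m = 0 ↔ n ≤ m) (hres : Nat.card (ResidueField A) = 2 ^ r) (hr : 0 < r)
    (hk : 1 ≤ k) :
    Nat.card (range fun x : onePlusP 2 A => x ^ 2 ^ k) = 2 ^ ((n - (k + 1)) * r - 1) := by
  rw [card_range_pow_onePlusP_two hmax, range_one_add_two_mul_pow_two_pow hmax hk,
    ← image_image (1 + ·) (2 ^ (k + 1) * ·), Nat.card_image_of_injective (add_right_injective 1)]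
  rcases lt_or_ge (k + 1) n with hkn | hkn
  · have hS := card_image_two_pow_mul_range_add_sq_mul hmax h2 hkn
    have hA := card_range_add_sq_mul_two hmax
    rw [card_span_pow hmax h2 (Nat.sub_le n (k + 1)), Nat.sub_sub_self hkn.le, hres,
      ← pow_mul] at hS
    rw [card_eq_card_residueField_pow hmax h2, hres, ← pow_mul, ← hS] at hA
    refine Nat.eq_of_mul_eq_mul_right (by positivity : 0 < 2 ^ (r * (k + 1)) * 2) ?_
    rw [← mul_assoc, hA, ← pow_succ, ← pow_add]
    congr 1
    have hpos : 0 < (n - (k + 1)) * r := Nat.mul_pos (by omega) hr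
    have hsplit : r * n = (n - (k + 1)) * r + r * (k + 1) := by
      conv_lhs => rw [← Nat.sub_add_cancel hkn.le]
      ring
    omega
  · have hzero : (2 : A) ^ (k + 1) = 0 := (h2 _).2 hkn
    have himage : ((2 : A) ^ (k + 1) * ·) '' (range fun a : A => a + a ^ 2) = {0} := by
      simp only [hzero, zero_mul]
      exact (range_nonempty _).image_const 0
    rw [himage, Nat.card_unique, show n - (k + 1) = 0 by omega, zero_mul, Nat.zero_sub, pow_zero]

end MaximalIdealTwo

theorem card_range_pow_two_pow_multiplicative_zmod (a b m k : ℕ) :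
    Nat.card (range fun x : Multiplicative (ZMod 2 × ZMod (2 ^ a) × (Fin m → ZMod (2 ^ b))) =>
      x ^ 2 ^ k) = 2 ^ ((1 - k) + (a - k) + m * (b - k)) := by
  have h1 := ZMod.card_range_pow_nsmul two_pos 1 k
  rw [pow_one] at h1
  rw [card_range_pow_multiplicative, card_range_nsmul_prod, card_range_nsmul_prod,
    card_range_nsmul_pi, h1]
  simp only [ZMod.card_range_pow_nsmul two_pos, Finset.prod_const, Finset.card_univ,
    Fintype.card_fin, ← pow_mul, ← pow_add]
  ring

/-- **Structure of `1 + 2A` for `p = 2`, `n ≥ 3`.** If `A = GR(2^n, r)` is a Galois ring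
with `n ≥ 3`, then the multiplicative group `1 + 2A` is isomorphic to
`ℤ/2ℤ × ℤ/2^(n-2)ℤ × (ℤ/2^(n-1)ℤ)^(r-1)`. -/
theorem onePlusP_structure_two (n r : ℕ) (hn : 3 ≤ n) (hr : 0 < r)
    (A : Type) [CommRing A] [Fintype A] [IsLocalRing A]
    (hchar : CharP A (2 ^ n))
    (hmax : IsLocalRing.maximalIdeal A = Ideal.span {(2 : A)})
    (hres : Nat.card (IsLocalRing.ResidueField A) = 2 ^ r) :
    Nonempty (onePlusP 2 A ≃*
      Multiplicative (ZMod 2 × ZMod (2 ^ (n - 2)) × (Fin (r - 1) → ZMod (2 ^ (n - 1))))) := by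
  have h2 : ∀ m, (2 : A) ^ m = 0 ↔ n ≤ m := by
    simpa using CharP.natCast_pow_eq_zero_iff (R := A) one_lt_two
  have hG : IsPGroup 2 (onePlusP 2 A) := IsPGroup.of_card (card_onePlusP_two hmax h2 hres)
  refine hG.nonempty_mulEquiv_of_card_range_pow_eq fun k => ?_
  rw [card_range_pow_two_pow_multiplicative_zmod]
  obtain ⟨s, rfl⟩ := Nat.exists_eq_add_one_of_ne_zero hr.ne'
  rcases k with _ | k
  · simp only [pow_zero, pow_one, range_id', Nat.card_univ, card_onePlusP_two hmax h2 hres]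
    rw [show 1 - 0 + (n - 2 - 0) = n - 1 by omega, Nat.add_sub_cancel, Nat.sub_zero]
    ring
  · rw [card_range_pow_onePlusP_two_of_pos hmax h2 hres hr (by omega)]
    rw [show 1 - (k + 1) = 0 by omega, show n - 2 - (k + 1) = n - (k + 1 + 1) - 1 by omega,
      show n - 1 - (k + 1) = n - (k + 1 + 1) by omega, Nat.add_sub_cancel]
    generalize n - (k + 1 + 1) = t
    rcases t with _ | t
    · simp
    · rw [Nat.mul_succ, mul_comm s]
      congr 1
      omega
end

section
/- Let A be a Galois ring GR(p^n, r) and let i be a natural number. If p is odd, or if p = 2 and n ≤ 2, then the set of p^i-th powers of elements of 1 + pA equals 1 + p^{i+1}A; that is, {(1 + p·a)^{p^i} : a ∈ A} = {1 + p^{i+1}·a : a ∈ A}. -/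
/-!
Raising to the `p`-th power moves `1 + p^(k+1) R` into `1 + p^(k+2) R`, by the binomial theorem.
Conversely, for odd `p` the congruence `(u + p y)^p ≡ u^p + p² y u^(p-1) (mod p³ y)` lets one correct
an approximate `p`-th root one power of `p` at a time (Hensel lifting); since `p` is nilpotent the
process ends with an exact root. When `p = 2` and `4 = 0`, every step is trivial because
`1 + 4 R = {1}`.
-/

section OnePlusPowMul

variable {R : Type*} [CommRing R]

theorem pow_three_mul_dvd_add_mul_pow_sub {p : ℕ} (hp : Odd p) (a b : R) :
    (p : R) ^ 3 * b ∣ (a + p * b) ^ p - a ^ p - p ^ 2 * b * a ^ (p - 1) := by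
  obtain ⟨c, hc⟩ := odd_sq_dvd_geom_sum₂_sub a b hp
  exact ⟨c, by linear_combination -geom_sum₂_mul (a + p * b) a p + (p * b) * hc⟩

theorem exists_one_add_pow_mul_pow_eq_one_add (p k : ℕ) (b : R) :
    ∃ c : R, (1 + (p : R) ^ (k + 1) * b) ^ p = 1 + (p : R) ^ (k + 2) * c := by
  obtain ⟨d, hd⟩ := sq_dvd_add_pow_sub_sub ((p : R) ^ (k + 1) * b) 1 p
  exact ⟨b + (p : R) ^ k * b ^ 2 * d, by linear_combination hd⟩

theorem Odd.exists_pow_eq_one_add_pow_mul {p : ℕ} (hp : Odd p) (hnil : IsNilpotent (p : R))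
    (k : ℕ) (b : R) : ∃ a : R, (1 + (p : R) ^ (k + 1) * a) ^ p = 1 + (p : R) ^ (k + 2) * b := by
  have approx : ∀ j, ∃ a d : R,
      (1 + (p : R) ^ (k + 1) * a) ^ p = 1 + (p : R) ^ (k + 2) * b + (p : R) ^ (k + 2 + j) * d := by
    intro j
    induction j with
    | zero => exact ⟨0, -b, by ring⟩
    | succ j ih =>
      obtain ⟨a, d, had⟩ := ih
      set u : R := 1 + (p : R) ^ (k + 1) * a
      obtain ⟨s, hs⟩ := sub_one_dvd_pow_sub_one u (p - 1)
      obtain ⟨c, hc⟩ := pow_three_mul_dvd_add_mul_pow_sub hp u (-((p : R) ^ (k + j) * d))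
      -- Shifting the root by `-p^(k+1+j) d` shifts its `p`-th power by `-p^(k+2+j) d u^(p-1)`,
      -- which cancels the error term since `u^(p-1) ≡ 1 (mod p^(k+1))`.
      have hcorr : 1 + (p : R) ^ (k + 1) * (a - (p : R) ^ j * d)
          = u + p * (-((p : R) ^ (k + j) * d)) := by ring
      refine ⟨a - (p : R) ^ j * d, -((p : R) ^ k * d * a * s + d * c), ?_⟩
      rw [hcorr]
      linear_combination hc + had - (p : R) ^ (k + j + 2) * d * hs
  obtain ⟨N, hN⟩ := hnil
  obtain ⟨a, d, had⟩ := approx N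
  exact ⟨a, by rw [had, pow_add (p : R) _ N, hN]; ring⟩

theorem exists_one_add_mul_pow_pow_eq_one_add (p : ℕ) (a : R) (i : ℕ) :
    ∃ b : R, (1 + (p : R) * a) ^ p ^ i = 1 + (p : R) ^ (i + 1) * b := by
  induction i with
  | zero => exact ⟨a, by simp⟩
  | succ i ih =>
    obtain ⟨b, hb⟩ := ih
    obtain ⟨c, hc⟩ := exists_one_add_pow_mul_pow_eq_one_add p i b
    exact ⟨c, by rw [pow_succ, pow_mul, hb, hc]⟩

theorem exists_pow_pow_eq_one_add_pow_mul_of_forall {p : ℕ}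
    (hstep : ∀ (k : ℕ) (b : R), ∃ a : R, (1 + (p : R) ^ (k + 1) * a) ^ p = 1 + (p : R) ^ (k + 2) * b)
    (i : ℕ) (b : R) : ∃ a : R, (1 + (p : R) * a) ^ p ^ i = 1 + (p : R) ^ (i + 1) * b := by
  induction i generalizing b with
  | zero => exact ⟨b, by simp⟩
  | succ i ih =>
    obtain ⟨a', ha'⟩ := hstep i b
    obtain ⟨a, ha⟩ := ih a'
    exact ⟨a, by rw [pow_succ, pow_mul, ha, ha']⟩

theorem setOf_one_add_mul_pow_pow_eq {p : ℕ}
    (hstep : ∀ (k : ℕ) (b : R), ∃ a : R, (1 + (p : R) ^ (k + 1) * a) ^ p = 1 + (p : R) ^ (k + 2) * b)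
    (i : ℕ) :
    {x : R | ∃ a : R, x = (1 + p * a) ^ p ^ i} = {x : R | ∃ a : R, x = 1 + (p : R) ^ (i + 1) * a} := by
  ext x
  constructor
  · rintro ⟨a, rfl⟩
    exact (exists_one_add_mul_pow_pow_eq_one_add p a i).imp fun _ => id
  · rintro ⟨b, rfl⟩
    exact (exists_pow_pow_eq_one_add_pow_mul_of_forall hstep i b).imp fun _ => Eq.symm

end OnePlusPowMul

theorem onePlusP_pow_p_general (p n : ℕ) (i : ℕ)
    (A : Type) [CommRing A]
    (hchar : CharP A (p ^ n))
    (hodd : Odd p ∨ (p = 2 ∧ n ≤ 2)) :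
    {x : A | ∃ a : A, x = (1 + p * a) ^ p ^ i} = {x : A | ∃ a : A, x = 1 + (p : A) ^ (i + 1) * a} := by
  have hpn : (p : A) ^ n = 0 := by exact_mod_cast CharP.cast_eq_zero A (p ^ n)
  refine setOf_one_add_mul_pow_pow_eq (fun k b => ?_) i
  rcases hodd with hodd | ⟨rfl, hn⟩
  · exact hodd.exists_pow_eq_one_add_pow_mul ⟨n, hpn⟩ k b
  · have h4 : ((2 : ℕ) : A) ^ 2 = 0 := pow_eq_zero_of_le hn hpn
    exact ⟨0, by rw [pow_add _ k 2, h4]; ring⟩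

/-- **`p^i`-th powers of `1 + pA`.** If `A = GR(p^n, r)` is a Galois ring and `p` is odd,
or `p = 2` and `n ≤ 2`, then the set of `p^i`-th powers of elements of `1 + pA` is
exactly `1 + p^(i+1)A`. -/
theorem onePlusP_pow_p (p n r : ℕ) (i : ℕ) (hp : p.Prime) (hn : 0 < n) (hr : 0 < r)
    (A : Type) [CommRing A] [Fintype A] [IsLocalRing A]
    (hchar : CharP A (p ^ n))
    (hmax : IsLocalRing.maximalIdeal A = Ideal.span {(p : A)})
    (hres : Nat.card (IsLocalRing.ResidueField A) = p ^ r)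
    (hodd : Odd p ∨ (p = 2 ∧ n ≤ 2)) :
    {x : A | ∃ a : A, x = (1 + p * a) ^ p ^ i} = {x : A | ∃ a : A, x = 1 + (p : A) ^ (i + 1) * a} :=
  onePlusP_pow_p_general p n i A hchar hodd
end

section
/- Let A be a Galois ring GR(p^n, r) and B a Galois ring GR(p^n, r'). Then there exists an injective ring homomorphism from A into B if and only if r divides r'. -/
/-!
A ring map `f : GR(p^n, r) → GR(p^n, r')` sends the maximal ideal `(p)` into `(p)`, so it induces
an embedding of residue fields `𝔽_{p^r} → 𝔽_{p^{r'}}`, which forces `r ∣ r'`.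

Conversely, let `x` generate `𝔽_{p^r}` and let `M ∈ ℤ[X]` be a monic lift of its (separable)
minimal polynomial. Since the maximal ideals are nilpotent, Hensel's lemma lifts `x` to a root `α`
of `M` in `A`, and `α` generates `A` as a ring; comparing cardinalities (`|A| = p^{nr}`) shows
`A ≅ (ℤ/p^n)[X]/(M)`. If `r ∣ r'`, the image of `x` in `𝔽_{p^{r'}}` is again a simple root of `M`,
which lifts to a root `β ∈ B`, and `α ↦ β` defines a ring map `A → B`. Every ring map from `A` to
a ring of characteristic `p^n` is injective, because each nonzero element of `A` is `p^i` times a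
unit with `i < n`.
-/

open IsLocalRing Polynomial

section PrincipalMaximalIdeal

variable {A : Type*} [CommRing A] [IsLocalRing A] {π : A}

theorem exists_eq_pow_mul_unit_of_maximalIdeal_eq_span (hmax : maximalIdeal A = Ideal.span {π})
    {n : ℕ} (hπ : π ^ n = 0) {a : A} (ha : a ≠ 0) : ∃ i < n, ∃ u : Aˣ, a = π ^ i * u := by
  classical
  set i := Nat.findGreatest (fun i => π ^ i ∣ a) n
  obtain ⟨b, hb⟩ : π ^ i ∣ a :=
    Nat.findGreatest_spec (P := fun i => π ^ i ∣ a) (Nat.zero_le n) (by simp)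
  have hi : i < n := by
    refine lt_of_le_of_ne (Nat.findGreatest_le n) fun h => ha ?_
    rw [hb, h, hπ, zero_mul]
  have hb_unit : IsUnit b := by
    by_contra hb_nonunit
    have hπb : b ∈ maximalIdeal A := hb_nonunit
    rw [hmax, Ideal.mem_span_singleton] at hπb
    refine Nat.findGreatest_is_greatest (Nat.lt_succ_self i) hi ?_
    exact hb ▸ pow_succ π i ▸ mul_dvd_mul_left _ hπb
  obtain ⟨u, rfl⟩ := hb_unit
  exact ⟨i, hi, u, hb⟩

theorem pow_mul_mem_span_pow_succ_iff (hmax : maximalIdeal A = Ideal.span {π}) {i : ℕ}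
    (hi : π ^ i ≠ 0) {a : A} : π ^ i * a ∈ Ideal.span {π ^ (i + 1)} ↔ a ∈ maximalIdeal A := by
  rw [hmax, Ideal.mem_span_singleton, Ideal.mem_span_singleton]
  constructor
  · rintro ⟨b, hb⟩
    by_contra hπa
    have hunit : IsUnit (a - π * b) := by
      by_contra h
      have hmem : a - π * b ∈ maximalIdeal A := h
      rw [hmax, Ideal.mem_span_singleton] at hmem
      exact hπa (by simpa using dvd_add hmem (dvd_mul_right π b))
    refine hi (hunit.mul_left_eq_zero.mp ?_)
    rw [mul_sub, hb]
    ring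
  · rintro ⟨c, rfl⟩
    exact ⟨c, by ring⟩

theorem natCard_eq_natCard_residueField_pow (hmax : maximalIdeal A = Ideal.span {π}) {n : ℕ}
    (hπ : π ^ n = 0) (hπ' : ∀ i < n, π ^ i ≠ 0) :
    Nat.card A = Nat.card (ResidueField A) ^ n := by
  have hindex : ∀ i ≤ n,
      (Ideal.span {π ^ i}).toAddSubgroup.index = Nat.card (ResidueField A) ^ i := by
    intro i hi
    induction i with
    | zero => simp
    | succ i ih =>
      have hle :
          (Ideal.span {π ^ (i + 1)}).toAddSubgroup ≤ (Ideal.span {π ^ i}).toAddSubgroup :=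
        Ideal.span_singleton_le_span_singleton.mpr (pow_dvd_pow π i.le_succ)
      have hmap : (⊤ : AddSubgroup A).map (AddMonoidHom.mulLeft (π ^ i)) =
          (Ideal.span {π ^ i}).toAddSubgroup := by
        ext a
        simp [Ideal.mem_span_singleton', mul_comm]
      have hcomap :
          (Ideal.span {π ^ (i + 1)}).toAddSubgroup.comap (AddMonoidHom.mulLeft (π ^ i)) =
            (maximalIdeal A).toAddSubgroup := by
        ext a
        exact pow_mul_mem_span_pow_succ_iff hmax (hπ' i (by omega))
      have hrel : (Ideal.span {π ^ (i + 1)}).toAddSubgroup.relIndex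
          (Ideal.span {π ^ i}).toAddSubgroup = Nat.card (ResidueField A) := by
        -- the index of `(π ^ (i + 1))` in `(π ^ i)` is that of its preimage `𝔪` under `π ^ i * ·`
        rw [← hmap, ← AddSubgroup.relIndex_comap, hcomap, AddSubgroup.relIndex_top_right]
        rfl
      rw [← AddSubgroup.relIndex_mul_index hle, hrel, ih (by omega), pow_succ, mul_comm]
  simpa [hπ] using hindex n le_rfl

theorem isLocalHom_of_maximalIdeal_eq_span {B : Type*} [CommRing B] [IsLocalRing B]
    (hmax : maximalIdeal A = Ideal.span {π}) (f : A →+* B) (hf : f π ∈ maximalIdeal B) :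
    IsLocalHom f :=
  ((local_hom_TFAE f).out 0 2).mpr <| by
    rwa [hmax, Ideal.map_span, Set.image_singleton, Ideal.span_le, Set.singleton_subset_iff]

theorem Subring.eq_top_of_map_residue_eq_top (hmax : maximalIdeal A = Ideal.span {π}) {n : ℕ}
    (hπ : π ^ n = 0) {S : Subring A} (hπS : π ∈ S) (hS : S.map (residue A) = ⊤) : S = ⊤ := by
  have approx : ∀ m (a : A), ∃ s ∈ S, ∃ c, a = s + π ^ m * c := by
    intro m
    induction m with
    | zero => exact fun a => ⟨0, S.zero_mem, a, by simp⟩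
    | succ m ih =>
      intro a
      obtain ⟨s, hs, b, rfl⟩ := ih a
      obtain ⟨t, ht, htb⟩ : residue A b ∈ S.map (residue A) := hS ▸ Subring.mem_top _
      have hbt : b - t ∈ maximalIdeal A := by
        rw [← residue_eq_zero_iff, map_sub, htb, sub_self]
      rw [hmax, Ideal.mem_span_singleton] at hbt
      obtain ⟨c, hc⟩ := hbt
      refine ⟨s + π ^ m * t, S.add_mem hs (S.mul_mem (S.pow_mem hπS m) ht), c, ?_⟩
      linear_combination π ^ m * hc
  refine eq_top_iff.mpr fun a _ => ?_
  obtain ⟨s, hs, c, rfl⟩ := approx n a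
  simpa [hπ] using hs

end PrincipalMaximalIdeal

theorem HenselianRing.exists_eval₂_eq_zero_residue_eq {R S : Type*} [CommRing R] [CommRing S]
    [IsLocalRing S] [HenselianRing S (maximalIdeal S)] (φ : R →+* S) {h : R[X]} (hh : h.Monic)
    {x : ResidueField S} (hx : h.eval₂ ((residue S).comp φ) x = 0)
    (hx' : (derivative h).eval₂ ((residue S).comp φ) x ≠ 0) :
    ∃ a : S, h.eval₂ φ a = 0 ∧ residue S a = x := by
  obtain ⟨a₀, rfl⟩ := residue_surjective x
  have hres : ∀ g : R[X],
      residue S ((g.map φ).eval a₀) = g.eval₂ ((residue S).comp φ) (residue S a₀) :=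
    fun g => by rw [eval_map, hom_eval₂]
  obtain ⟨a, ha, ha₀⟩ := HenselianRing.is_henselian (h.map φ) (hh.map φ) a₀
    (by rw [← residue_eq_zero_iff, hres, hx])
    (by rw [derivative_map]; exact (hres _).symm ▸ hx'.isUnit)
  refine ⟨a, by rwa [IsRoot, eval_map] at ha, ?_⟩
  rwa [← sub_eq_zero, ← map_sub, residue_eq_zero_iff]

theorem ZMod.toSubring_adjoin {n : ℕ} {K : Type*} [Ring K] [Algebra (ZMod n) K] (s : Set K) :
    (Algebra.adjoin (ZMod n) s).toSubring = Subring.closure s := by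
  rw [Algebra.adjoin_eq_ring_closure]
  refine le_antisymm (Subring.closure_le.mpr (Set.union_subset ?_ Subring.subset_closure))
    (Subring.closure_mono Set.subset_union_right)
  rintro _ ⟨z, rfl⟩
  rw [← ZMod.intCast_zmod_cast z, map_intCast]
  exact intCast_mem _ _

theorem FiniteField.exists_closure_singleton_eq_top (p : ℕ) [Fact p.Prime] (K : Type*) [Field K]
    [Finite K] [Algebra (ZMod p) K] :
    ∃ x : K, Subring.closure {x} = ⊤ ∧
      (minpoly (ZMod p) x).natDegree = Module.finrank (ZMod p) K := by
  let pb := Field.powerBasisOfFiniteOfSeparable (ZMod p) K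
  refine ⟨pb.gen, ?_, by rw [pb.natDegree_minpoly, pb.finrank]⟩
  rw [← ZMod.toSubring_adjoin (n := p), pb.adjoin_gen_eq_top, Algebra.top_toSubring]

theorem AdjoinRoot.natCard_of_monic {R : Type*} [CommRing R] {g : R[X]} (hg : g.Monic) :
    Nat.card (AdjoinRoot g) = Nat.card R ^ g.natDegree := by
  rw [Nat.card_congr (AdjoinRoot.powerBasis' hg).basis.equivFun.toEquiv, Nat.card_fun,
    Nat.card_fin, AdjoinRoot.powerBasis'_dim]

def RingHom.toZModAlgHom {n : ℕ} {R S : Type*} [Ring R] [Ring S] [Algebra (ZMod n) R]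
    [Algebra (ZMod n) S] (f : R →+* S) : R →ₐ[ZMod n] S :=
  { f with commutes' := RingHom.congr_fun (Subsingleton.elim (f.comp (algebraMap _ R)) _) }

theorem Polynomial.eval₂_map_intCastRingHom (M : ℤ[X]) {R S : Type*} [Ring R] [Ring S]
    (f : R →+* S) (y : S) :
    (M.map (Int.castRingHom R)).eval₂ f y = M.eval₂ (Int.castRingHom S) y := by
  rw [eval₂_map, Subsingleton.elim (f.comp _) (Int.castRingHom S)]

theorem HenselianRing.exists_eval₂_eq_zero_of_separable {F S : Type*} [Field F] [CommRing S]
    [IsLocalRing S] [HenselianRing S (maximalIdeal S)] [Algebra F (ResidueField S)] {M : ℤ[X]}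
    (hM : M.Monic) (hsep : (M.map (Int.castRingHom F)).Separable) {y : ResidueField S}
    (hy : aeval y (M.map (Int.castRingHom F)) = 0) :
    ∃ a : S, M.eval₂ (Int.castRingHom S) a = 0 ∧ residue S a = y := by
  have hres : ∀ N : ℤ[X], N.eval₂ ((residue S).comp (Int.castRingHom S)) y =
      aeval y (N.map (Int.castRingHom F)) := fun N => by
    rw [aeval_def, eval₂_map_intCastRingHom, Subsingleton.elim ((residue S).comp _) _]
  refine exists_eval₂_eq_zero_residue_eq _ hM (by rw [hres, hy]) ?_
  rw [hres, ← derivative_map]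
  exact hsep.aeval_derivative_ne_zero hy

theorem CharP.natCast_pow_ne_zero_of_lt {R : Type*} [Ring R] {p n i : ℕ} [CharP R (p ^ n)]
    (hp : 1 < p) (hi : i < n) : (p : R) ^ i ≠ 0 := by
  rw [← Nat.cast_pow, Ne, CharP.cast_eq_zero_iff R (p ^ n), Nat.pow_dvd_pow_iff_le_right hp]
  omega

section GaloisRing

variable {p n : ℕ} {A : Type*} [CommRing A] [IsLocalRing A]

theorem charP_residueField_of_maximalIdeal_eq_span (hp : p.Prime)
    (hmax : maximalIdeal A = Ideal.span {(p : A)}) : CharP (ResidueField A) p :=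
  (CharP.charP_iff_prime_eq_zero hp).mpr <| by
    rw [← map_natCast (residue A), residue_eq_zero_iff, hmax]
    exact Ideal.mem_span_singleton_self _

variable [CharP A (p ^ n)]

theorem injective_of_maximalIdeal_eq_span_of_charP (hp : 1 < p)
    (hmax : maximalIdeal A = Ideal.span {(p : A)}) {B : Type*} [Ring B] [CharP B (p ^ n)]
    (f : A →+* B) : Function.Injective f := by
  refine (injective_iff_map_eq_zero f).mpr fun a hfa => by_contra fun ha => ?_
  obtain ⟨i, hi, u, rfl⟩ := exists_eq_pow_mul_unit_of_maximalIdeal_eq_span hmax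
    (by exact_mod_cast CharP.cast_eq_zero A (p ^ n)) ha
  rw [map_mul, map_pow, map_natCast] at hfa
  exact CharP.natCast_pow_ne_zero_of_lt hp hi
    ((u.map f.toMonoidHom).isUnit.mul_left_eq_zero.mp hfa)

theorem natCard_eq_natCard_residueField_pow_of_charP (hp : 1 < p)
    (hmax : maximalIdeal A = Ideal.span {(p : A)}) :
    Nat.card A = Nat.card (ResidueField A) ^ n :=
  natCard_eq_natCard_residueField_pow hmax (by exact_mod_cast CharP.cast_eq_zero A (p ^ n))
    fun _ hi => CharP.natCast_pow_ne_zero_of_lt hp hi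

theorem bijective_adjoinRoot_lift (hp : 1 < p) (hmax : maximalIdeal A = Ideal.span {(p : A)})
    {h : (ZMod (p ^ n))[X]} (hh : h.Monic) (hcard : Nat.card (ResidueField A) = p ^ h.natDegree)
    {α : A} (hα : h.eval₂ (ZMod.castHom dvd_rfl A) α = 0)
    (hgen : Subring.closure {residue A α} = ⊤) :
    Function.Bijective (AdjoinRoot.lift (ZMod.castHom dvd_rfl A) α hα) := by
  have : NeZero (p ^ n) := ⟨pow_ne_zero n (by omega)⟩
  have : Module.Finite (ZMod (p ^ n)) (AdjoinRoot h) := hh.finite_adjoinRoot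
  have : Finite (AdjoinRoot h) := Module.finite_of_finite (ZMod (p ^ n))
  refine (Nat.bijective_iff_surjective_and_card _).mpr ⟨?_, ?_⟩
  · rw [← RingHom.range_eq_top]
    refine Subring.eq_top_of_map_residue_eq_top hmax
      (by exact_mod_cast CharP.cast_eq_zero A (p ^ n)) (natCast_mem _ p) ?_
    rw [eq_top_iff, ← hgen, Subring.closure_le, Set.singleton_subset_iff]
    exact ⟨α, ⟨AdjoinRoot.root h, AdjoinRoot.lift_root hα⟩, rfl⟩
  · rw [AdjoinRoot.natCard_of_monic hh, Nat.card_zmod,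
      natCard_eq_natCard_residueField_pow_of_charP hp hmax, hcard, ← pow_mul, ← pow_mul, mul_comm]

end GaloisRing

theorem nonempty_ringHom_of_residueField_algHom {p n : ℕ} [hp : Fact p.Prime] {A B : Type*}
    [CommRing A] [IsLocalRing A] [CharP A (p ^ n)] [HenselianRing A (maximalIdeal A)]
    [Algebra (ZMod p) (ResidueField A)] [Finite (ResidueField A)]
    [CommRing B] [IsLocalRing B] [CharP B (p ^ n)] [HenselianRing B (maximalIdeal B)]
    [Algebra (ZMod p) (ResidueField B)]
    (hmax : maximalIdeal A = Ideal.span {(p : A)})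
    (ι : ResidueField A →ₐ[ZMod p] ResidueField B) : Nonempty (A →+* B) := by
  obtain ⟨x, hx_gen, hx_deg⟩ := FiniteField.exists_closure_singleton_eq_top p (ResidueField A)
  obtain ⟨M, hM, hM_deg, hM_monic⟩ := lifts_and_degree_eq_and_monic
    (map_surjective (Int.castRingHom (ZMod p)) ZMod.intCast_surjective (minpoly (ZMod p) x))
    (minpoly.monic (.of_finite (ZMod p) x))
  have hM_sep : (M.map (Int.castRingHom (ZMod p))).Separable :=
    hM ▸ Algebra.IsSeparable.isSeparable (ZMod p) x
  obtain ⟨α, hα, rfl⟩ := HenselianRing.exists_eval₂_eq_zero_of_separable hM_monic hM_sep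
    (hM ▸ minpoly.aeval (ZMod p) x)
  obtain ⟨β, hβ, -⟩ := HenselianRing.exists_eval₂_eq_zero_of_separable (S := B) hM_monic hM_sep
    (y := ι (residue A α)) (by rw [hM, aeval_algHom_apply, minpoly.aeval, map_zero])
  set h := M.map (Int.castRingHom (ZMod (p ^ n)))
  have : Nontrivial (ZMod (p ^ n)) := (ZMod.castHom dvd_rfl A).domain_nontrivial
  have hcard : Nat.card (ResidueField A) = p ^ h.natDegree := by
    rw [hM_monic.natDegree_map, natDegree_eq_of_degree_eq hM_deg, hx_deg,
      FiniteField.pow_finrank_eq_natCard]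
  have hα' : h.eval₂ (ZMod.castHom dvd_rfl A) α = 0 := by rwa [eval₂_map_intCastRingHom]
  have hβ' : h.eval₂ (ZMod.castHom dvd_rfl B) β = 0 := by rwa [eval₂_map_intCastRingHom]
  have hφ := bijective_adjoinRoot_lift hp.out.one_lt hmax (hM_monic.map _) hcard hα' hx_gen
  exact ⟨(AdjoinRoot.lift _ β hβ').comp (RingEquiv.ofBijective _ hφ).symm.toRingHom⟩

theorem galois_ring_embedding_iff_dvd_general (p n r r' : ℕ) (hp : p.Prime)
    (A B : Type) [CommRing A] [Fintype A] [IsLocalRing A]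
    [CommRing B] [Fintype B] [IsLocalRing B]
    (hcharA : CharP A (p ^ n)) (hcharB : CharP B (p ^ n))
    (hmaxA : IsLocalRing.maximalIdeal A = Ideal.span {(p : A)})
    (hmaxB : IsLocalRing.maximalIdeal B = Ideal.span {(p : B)})
    (hresA : Nat.card (IsLocalRing.ResidueField A) = p ^ r)
    (hresB : Nat.card (IsLocalRing.ResidueField B) = p ^ r') :
    (∃ f : A →+* B, Function.Injective f) ↔ r ∣ r' := by
  have := Fact.mk hp
  have : Finite (ResidueField A) := .of_surjective _ (residue_surjective (R := A))
  have : Finite (ResidueField B) := .of_surjective _ (residue_surjective (R := B))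
  have := charP_residueField_of_maximalIdeal_eq_span hp hmaxA
  have := charP_residueField_of_maximalIdeal_eq_span hp hmaxB
  let _ := ZMod.algebra (ResidueField A) p
  let _ := ZMod.algebra (ResidueField B) p
  have hrA : Module.finrank (ZMod p) (ResidueField A) = r :=
    Nat.pow_right_injective hp.two_le ((FiniteField.pow_finrank_eq_natCard p _).trans hresA)
  have hrB : Module.finrank (ZMod p) (ResidueField B) = r' :=
    Nat.pow_right_injective hp.two_le ((FiniteField.pow_finrank_eq_natCard p _).trans hresB)
  rw [← hrA, ← hrB, ← FiniteField.nonempty_algHom_iff_finrank_dvd]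
  constructor
  · rintro ⟨f, -⟩
    have := isLocalHom_of_maximalIdeal_eq_span hmaxA f <| by
      rw [map_natCast, hmaxB]
      exact Ideal.mem_span_singleton_self _
    exact ⟨(ResidueField.map f).toZModAlgHom⟩
  · rintro ⟨ι⟩
    obtain ⟨f⟩ := nonempty_ringHom_of_residueField_algHom hmaxA ι
    exact ⟨f, injective_of_maximalIdeal_eq_span_of_charP hp.one_lt hmaxA f⟩

/-- **Embeddings of Galois rings.** If `A = GR(p^n, r)` and `B = GR(p^n, r')` are Galois
rings, then there is an injective ring homomorphism `A → B` if and only if `r ∣ r'`. -/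
theorem galois_ring_embedding_iff_dvd (p n r r' : ℕ) (hp : p.Prime) (hn : 0 < n)
    (hr : 0 < r) (hr' : 0 < r')
    (A B : Type) [CommRing A] [Fintype A] [IsLocalRing A]
    [CommRing B] [Fintype B] [IsLocalRing B]
    (hcharA : CharP A (p ^ n)) (hcharB : CharP B (p ^ n))
    (hmaxA : IsLocalRing.maximalIdeal A = Ideal.span {(p : A)})
    (hmaxB : IsLocalRing.maximalIdeal B = Ideal.span {(p : B)})
    (hresA : Nat.card (IsLocalRing.ResidueField A) = p ^ r)
    (hresB : Nat.card (IsLocalRing.ResidueField B) = p ^ r') :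
    (∃ f : A →+* B, Function.Injective f) ↔ r ∣ r' :=
  galois_ring_embedding_iff_dvd_general p n r r' hp A B hcharA hcharB hmaxA hmaxB hresA hresB
end

section
/- Let R = GE(u) = A[X]/(X^e − p·u, X^s) be a pure Galois–Eisenstein ring of parameters (p, n, r, e, s), and let θ denote the image of X in R. Then R is a finite local commutative ring whose maximal ideal is generated by θ, one has θ^e = p·u, θ^s = 0 but θ^{s−1} ≠ 0, every ideal of R is a power of the maximal ideal (so the ideals form the chain 0 = (θ^s) ⊊ (θ^{s−1}) ⊊ ⋯ ⊊ (θ) ⊊ R), and R has exactly p^{rs} elements. -/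
set_option maxHeartbeats 1000000

namespace GEAux

variable {R : Type} [CommRing R] {θ : R} {s : ℕ}

lemma isNilpotent_of_mem (hθ : θ ^ s = 0) {x : R} (hx : x ∈ Ideal.span {θ}) :
    IsNilpotent x := by
  obtain ⟨c, rfl⟩ := Ideal.mem_span_singleton'.mp hx
  exact ⟨s, by rw [mul_pow, hθ, mul_zero]⟩

lemma isUnit_of_not_mem (hθ : θ ^ s = 0) (hf : IsField (R ⧸ Ideal.span {θ}))
    {x : R} (hx : x ∉ Ideal.span {θ}) : IsUnit x := by
  letI := hf.toField
  have h0 : Ideal.Quotient.mk (Ideal.span {θ}) x ≠ 0 := by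
    simpa [Ideal.Quotient.eq_zero_iff_mem] using hx
  obtain ⟨y, hy⟩ := hf.mul_inv_cancel h0
  obtain ⟨z, rfl⟩ := Ideal.Quotient.mk_surjective y
  have : x * z - 1 ∈ Ideal.span {θ} := by
    rw [← Ideal.Quotient.eq_zero_iff_mem]
    rw [← map_mul] at hy
    simp [hy]
  have hu : IsUnit (x * z) := by
    have := (isNilpotent_of_mem hθ this).isUnit_add_one
    simpa using this
  exact isUnit_of_mul_isUnit_left hu

lemma nontrivial_aux (hf : IsField (R ⧸ Ideal.span {θ})) : Nontrivial R := by
  letI := hf.toField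
  refine ⟨1, 0, fun h => ?_⟩
  have : (1 : R ⧸ Ideal.span {θ}) = 0 := by
    have := congrArg (Ideal.Quotient.mk (Ideal.span {θ})) h
    simpa using this
  exact one_ne_zero this

lemma isLocalRing (hθ : θ ^ s = 0) (hf : IsField (R ⧸ Ideal.span {θ})) :
    IsLocalRing R := by
  haveI := nontrivial_aux hf
  refine IsLocalRing.of_isUnit_or_isUnit_one_sub_self fun x => ?_
  by_cases hx : x ∈ Ideal.span {θ}
  · exact Or.inr ((isNilpotent_of_mem hθ hx).isUnit_one_sub)
  · exact Or.inl (isUnit_of_not_mem hθ hf hx)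

lemma pow_eq_zero_of_mem_succ (hθ : θ ^ s = 0) (hf : IsField (R ⧸ Ideal.span {θ}))
    {k : ℕ} (h : θ ^ k ∈ Ideal.span {θ ^ (k + 1)}) : θ ^ k = 0 := by
  obtain ⟨c, hc⟩ := Ideal.mem_span_singleton'.mp h
  have hmem : c * θ ∈ Ideal.span {θ} := Ideal.mem_span_singleton'.mpr ⟨c, rfl⟩
  have hu : IsUnit (1 - c * θ) := (isNilpotent_of_mem hθ hmem).isUnit_one_sub
  obtain ⟨v, hv⟩ := hu
  have : θ ^ k * (1 - c * θ) = 0 := by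
    rw [mul_sub, mul_one, show θ ^ k * (c * θ) = c * θ ^ (k + 1) by ring, hc, sub_self]
  have := congrArg (· * (↑v⁻¹ : R)) this
  simp only [zero_mul] at this
  rw [mul_assoc, ← hv] at this
  simpa [Units.mul_inv] using this

lemma ideal_eq_pow (hθ : θ ^ s = 0) (hf : IsField (R ⧸ Ideal.span {θ}))
    (I : Ideal R) : ∃ k : ℕ, I = Ideal.span {θ} ^ k := by
  by_cases hbot : I = ⊥
  · exact ⟨s, by rw [Ideal.span_singleton_pow, hθ, hbot, Ideal.span_singleton_eq_bot.mpr rfl]⟩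
  · have hex : ∃ k, ¬ I ≤ Ideal.span {θ} ^ k := by
      refine ⟨s, fun h => hbot ?_⟩
      rw [Ideal.span_singleton_pow, hθ, Ideal.span_singleton_eq_bot.mpr rfl] at h
      exact le_bot_iff.mp h
    classical
    set k := Nat.find hex with hk
    have hk1 : k ≠ 0 := by
      intro h
      have := Nat.find_spec hex
      rw [← hk, h] at this
      simp at this
    obtain ⟨j, hj⟩ : ∃ j, k = j + 1 := ⟨k - 1, (Nat.succ_pred_eq_of_ne_zero hk1).symm⟩
    have hIj : I ≤ Ideal.span {θ} ^ j := by
      have := Nat.find_min hex (by omega : j < k)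
      simpa using this
    have hIk : ¬ I ≤ Ideal.span {θ} ^ k := Nat.find_spec hex
    obtain ⟨x, hxI, hxk⟩ := SetLike.not_le_iff_exists.mp hIk
    have hxj : x ∈ Ideal.span {θ ^ j} := by
      rw [← Ideal.span_singleton_pow]; exact hIj hxI
    obtain ⟨c, rfl⟩ := Ideal.mem_span_singleton'.mp hxj
    have hc : IsUnit c := by
      by_contra hc
      have hcmem : c ∈ Ideal.span {θ} := by
        by_contra h
        exact hc (isUnit_of_not_mem hθ hf h)
      obtain ⟨d, rfl⟩ := Ideal.mem_span_singleton'.mp hcmem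
      apply hxk
      rw [hj, Ideal.span_singleton_pow]
      exact Ideal.mem_span_singleton'.mpr ⟨d, by ring⟩
    refine ⟨j, le_antisymm hIj ?_⟩
    rw [Ideal.span_singleton_pow, Ideal.span_le]
    rintro y rfl
    obtain ⟨v, hv⟩ := hc
    have : θ ^ j = (↑v⁻¹ : R) * (c * θ ^ j) := by
      rw [← mul_assoc, ← hv, Units.inv_mul, one_mul]
    rw [this]
    exact Ideal.mul_mem_left _ _ hxI

lemma chain_strict (hθ : θ ^ s = 0) (hf : IsField (R ⧸ Ideal.span {θ}))
    (hne : θ ^ (s - 1) ≠ 0) {k : ℕ} (hk : k < s) :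
    Ideal.span {θ} ^ (k + 1) < Ideal.span {θ} ^ k := by
  refine lt_of_le_of_ne (Ideal.pow_le_pow_right (by omega)) fun h => ?_
  have hmem : θ ^ k ∈ Ideal.span {θ ^ (k + 1)} := by
    rw [← Ideal.span_singleton_pow, h]
    rw [Ideal.span_singleton_pow]
    exact Ideal.mem_span_singleton_self _
  have h0 : θ ^ k = 0 := pow_eq_zero_of_mem_succ hθ hf hmem
  apply hne
  have : s - 1 = k + (s - 1 - k) := by omega
  rw [this, pow_add, h0, zero_mul]

end GEAux

namespace GEAux2

variable {R : Type} [CommRing R] {θ : R} {s : ℕ}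

lemma smul_mk (I : Ideal R) (a x : R) :
    a • (Ideal.Quotient.mk I x) = Ideal.Quotient.mk I (a * x) := rfl

lemma ker_eq (hunit : ∀ {x : R}, x ∉ Ideal.span {θ} → IsUnit x)
    (hzero : ∀ {k : ℕ}, θ ^ k ∈ Ideal.span {θ ^ (k + 1)} → θ ^ k = 0)
    {k : ℕ} (hk0 : θ ^ k ≠ 0) :
    LinearMap.ker (LinearMap.toSpanSingleton R (R ⧸ Ideal.span {θ ^ (k + 1)})
      (Ideal.Quotient.mk _ (θ ^ k))) = Ideal.span {θ} := by
  ext a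
  simp only [LinearMap.mem_ker, LinearMap.toSpanSingleton_apply]
  rw [smul_mk, Ideal.Quotient.eq_zero_iff_mem]
  constructor
  · intro h
    by_contra ha
    obtain ⟨v, hv⟩ := hunit ha
    obtain ⟨c, hc⟩ := Ideal.mem_span_singleton'.mp h
    have h1 : (↑v⁻¹ : R) * c * θ ^ (k + 1) = θ ^ k := by
      calc (↑v⁻¹ : R) * c * θ ^ (k + 1) = ↑v⁻¹ * (c * θ ^ (k + 1)) := by ring
        _ = ↑v⁻¹ * (a * θ ^ k) := by rw [hc]
        _ = (↑v⁻¹ * a) * θ ^ k := by ring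
        _ = θ ^ k := by rw [← hv, Units.inv_mul, one_mul]
    exact hk0 (hzero (Ideal.mem_span_singleton'.mpr ⟨_, h1⟩))
  · intro h
    obtain ⟨b, rfl⟩ := Ideal.mem_span_singleton'.mp h
    exact Ideal.mem_span_singleton'.mpr ⟨b, by ring⟩

lemma card_step [Finite R] (hunit : ∀ {x : R}, x ∉ Ideal.span {θ} → IsUnit x)
    (hzero : ∀ {k : ℕ}, θ ^ k ∈ Ideal.span {θ ^ (k + 1)} → θ ^ k = 0)
    {k : ℕ} (hk0 : θ ^ k ≠ 0) :
    Nat.card (R ⧸ Ideal.span {θ} ^ (k + 1)) =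
      Nat.card (R ⧸ Ideal.span {θ} ^ k) * Nat.card (R ⧸ Ideal.span {θ}) := by
  rw [Ideal.span_singleton_pow, Ideal.span_singleton_pow]
  set I : Ideal R := Ideal.span {θ ^ (k + 1)} with hI
  set J : Ideal R := Ideal.span {θ ^ k} with hJ
  have hIJ : I ≤ J := by
    rw [hI, hJ, Ideal.span_singleton_le_span_singleton]
    exact ⟨θ, by rw [pow_succ]⟩
  set N : Ideal (R ⧸ I) := J.map (Ideal.Quotient.mk I) with hN
  have lag : Nat.card (R ⧸ I) = Nat.card ((R ⧸ I) ⧸ N) * Nat.card N :=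
    AddSubgroup.card_eq_card_quotient_mul_card_addSubgroup
      (N.toAddSubgroup : AddSubgroup (R ⧸ I))
  have e1 : Nat.card ((R ⧸ I) ⧸ N) = Nat.card (R ⧸ J) :=
    Nat.card_congr (DoubleQuot.quotQuotEquivQuotOfLE hIJ).toEquiv
  set ψ : R →ₗ[R] (R ⧸ I) :=
    LinearMap.toSpanSingleton R (R ⧸ I) (Ideal.Quotient.mk I (θ ^ k)) with hψ
  have hrange : (LinearMap.range ψ : Set (R ⧸ I)) = (N : Set (R ⧸ I)) := by
    ext x
    constructor
    · rintro ⟨a, rfl⟩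
      show (a • Ideal.Quotient.mk I (θ ^ k)) ∈ N
      rw [smul_mk]
      exact Ideal.mem_map_of_mem _ (Ideal.mem_span_singleton'.mpr ⟨a, rfl⟩)
    · intro hx
      rw [hN, Ideal.map_span, Set.image_singleton] at hx
      obtain ⟨b, hb⟩ := Ideal.mem_span_singleton'.mp hx
      obtain ⟨a, rfl⟩ := Ideal.Quotient.mk_surjective b
      exact ⟨a, by rw [← hb, LinearMap.toSpanSingleton_apply, smul_mk, map_mul]⟩
  have hker : LinearMap.ker ψ = Ideal.span {θ} := ker_eq hunit hzero hk0
  have e2 : Nat.card N = Nat.card (R ⧸ Ideal.span {θ}) := by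
    have equiv1 : (R ⧸ LinearMap.ker ψ) ≃ₗ[R] LinearMap.range ψ := ψ.quotKerEquivRange
    have equiv2 : (R ⧸ Ideal.span {θ}) ≃ₗ[R] (R ⧸ LinearMap.ker ψ) :=
      Submodule.quotEquivOfEq _ _ hker.symm
    have h3 : Nat.card (LinearMap.range ψ) = Nat.card N :=
      Nat.card_congr (Equiv.setCongr hrange)
    rw [← h3]
    exact (Nat.card_congr ((equiv2.trans equiv1).toEquiv)).symm
  rw [lag, e1, e2]

lemma card_eq [Finite R] (hθ : θ ^ s = 0)
    (hunit : ∀ {x : R}, x ∉ Ideal.span {θ} → IsUnit x)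
    (hzero : ∀ {k : ℕ}, θ ^ k ∈ Ideal.span {θ ^ (k + 1)} → θ ^ k = 0)
    (hne : θ ^ (s - 1) ≠ 0) (hs : 1 ≤ s) :
    Nat.card R = Nat.card (R ⧸ Ideal.span {θ}) ^ s := by
  have key : ∀ k, k ≤ s → Nat.card (R ⧸ Ideal.span {θ} ^ k) =
      Nat.card (R ⧸ Ideal.span {θ}) ^ k := by
    intro k
    induction k with
    | zero =>
      intro _
      rw [pow_zero, Ideal.one_eq_top]
      haveI : Subsingleton (R ⧸ (⊤ : Ideal R)) := Ideal.Quotient.subsingleton_iff.mpr rfl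
      rw [Nat.card_of_subsingleton (0 : R ⧸ (⊤ : Ideal R)), pow_zero]
    | succ k ih =>
      intro hk
      have hk0 : θ ^ k ≠ 0 := by
        intro h
        apply hne
        have : s - 1 = k + (s - 1 - k) := by omega
        rw [this, pow_add, h, zero_mul]
      rw [card_step hunit hzero hk0, ih (by omega), pow_succ]
  have hbot : Ideal.span {θ} ^ s = ⊥ := by
    rw [Ideal.span_singleton_pow, hθ, Ideal.span_singleton_eq_bot.mpr rfl]
  have := key s le_rfl
  rw [hbot] at this
  rw [← this]
  exact Nat.card_congr (Submodule.quotEquivOfEqBot (⊥ : Ideal R) rfl).toEquiv.symm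

end GEAux2



open Polynomial in
/-- The pure Galois–Eisenstein ring `GE(u) = A[X]/(X^e - p·u, X^s)` built from a ring `A`
(a Galois ring `GR(p^n, r)`), an element `u` of `A` and integers `e`, `s`. -/
abbrev GaloisEisenstein (p : ℕ) (A : Type) [CommRing A] (u : A) (e s : ℕ) : Type :=
  Polynomial A ⧸ (Ideal.span {X ^ e - C ((p : A) * u), X ^ s} : Ideal (Polynomial A))

open Polynomial in
/-- The image `θ` of `X` in the pure Galois–Eisenstein ring `GE(u)`. -/
noncomputable def geTheta (p : ℕ) (A : Type) [CommRing A] (u : A) (e s : ℕ) : GaloisEisenstein p A u e s :=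
  Ideal.Quotient.mk _ X

open Polynomial in
/-- **Basic structure of a pure Galois–Eisenstein ring.** Let
`R = GE(u) = A[X]/(X^e - p·u, X^s)` be a pure Galois–Eisenstein ring of parameters
`(p, n, r, e, s)` and `θ` the image of `X`.  Then `R` is a finite local commutative ring
whose (unique) maximal ideal is `(θ)`; one has `θ^e = p·u`, `θ^s = 0`, `θ^(s-1) ≠ 0`;
every ideal of `R` is a power of `(θ)`, these powers form a strictly decreasing chain
`0 = (θ^s) ⊊ (θ^(s-1)) ⊊ ⋯ ⊊ (θ) ⊊ R`; and `R` has exactly `p^(r·s)` elements. -/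
theorem galoisEisenstein_structure (p n r e s : ℕ) (hp : p.Prime)
    (hn : 2 ≤ n) (hr : 0 < r) (he : 1 ≤ e) (hs₁ : (n - 1) * e < s) (hs₂ : s ≤ n * e)
    (A : Type) [CommRing A] [Fintype A] [IsLocalRing A]
    (hchar : CharP A (p ^ n))
    (hmax : IsLocalRing.maximalIdeal A = Ideal.span {(p : A)})
    (hres : Nat.card (IsLocalRing.ResidueField A) = p ^ r)
    (u : Aˣ) :
    Finite (GaloisEisenstein p A (u : A) e s) ∧
    IsLocalRing (GaloisEisenstein p A (u : A) e s) ∧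
    (Ideal.span {geTheta p A (u : A) e s}).IsMaximal ∧
    (∀ I : Ideal (GaloisEisenstein p A (u : A) e s), I ≠ ⊤ →
      I ≤ Ideal.span {geTheta p A (u : A) e s}) ∧
    geTheta p A (u : A) e s ^ e =
      algebraMap A (GaloisEisenstein p A (u : A) e s) ((p : A) * u) ∧
    geTheta p A (u : A) e s ^ s = 0 ∧
    geTheta p A (u : A) e s ^ (s - 1) ≠ 0 ∧
    (∀ I : Ideal (GaloisEisenstein p A (u : A) e s), ∃ k : ℕ,
      I = Ideal.span {geTheta p A (u : A) e s} ^ k) ∧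
    (∀ k < s, Ideal.span {geTheta p A (u : A) e s} ^ (k + 1) <
      Ideal.span {geTheta p A (u : A) e s} ^ k) ∧
    Nat.card (GaloisEisenstein p A (u : A) e s) = p ^ (r * s) := by
  have hsge : 1 ≤ s := by
    have : (n - 1) * e < s := hs₁
    omega
  obtain ⟨hfield, hcardres⟩ : IsField ((GaloisEisenstein p A (u : A) e s) ⧸
        Ideal.span {geTheta p A (u : A) e s}) ∧
      Nat.card ((GaloisEisenstein p A (u : A) e s) ⧸
        Ideal.span {geTheta p A (u : A) e s}) = p ^ r := by

    have hs0 : s ≠ 0 := by nlinarith [Nat.one_le_iff_ne_zero.mpr (by omega : n - 1 ≠ 0)]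
    set f : A[X] := X ^ e - C ((p : A) * u) with hfdef
    set It : Ideal A[X] := Ideal.span {f, X ^ s} with hIt
    set Ip : Ideal A := Ideal.span {(p : A)} with hIp
    set Φ : A[X] →+* A ⧸ Ip := Polynomial.eval₂RingHom (Ideal.Quotient.mk Ip) 0 with hΦ
    have hmkp : Ideal.Quotient.mk Ip (p : A) = 0 :=
      Ideal.Quotient.eq_zero_iff_mem.mpr (Ideal.mem_span_singleton_self _)
    have hmkp' : ((p : ℕ) : A ⧸ Ip) = 0 := by
      rw [← map_natCast (Ideal.Quotient.mk Ip)]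
      exact hmkp
    have hΦf : Φ f = 0 := by
      simp [hΦ, hfdef, zero_pow (by omega : e ≠ 0), hmkp, hmkp']
    have hΦXs : Φ (X ^ s) = 0 := by
      simp [hΦ, zero_pow hs0]
    have h1 : ∀ g ∈ It, Φ g = 0 := by
      intro g hg
      rw [← RingHom.mem_ker]
      revert hg
      refine fun hg => Ideal.span_le.mpr ?_ hg
      rintro x (rfl | rfl)
      · exact hΦf
      · simpa using hΦXs
    set Φ' : GaloisEisenstein p A (u : A) e s →+* A ⧸ Ip := Ideal.Quotient.lift It Φ h1 with hΦ'
    have hΦ'θ : Φ' (geTheta p A (u : A) e s) = 0 := by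
      show Φ' (Ideal.Quotient.mk It X) = 0
      rw [hΦ', Ideal.Quotient.lift_mk]
      simp [hΦ]
    have h2 : ∀ x ∈ Ideal.span {geTheta p A (u : A) e s}, Φ' x = 0 := by
      intro x hx
      obtain ⟨c, rfl⟩ := Ideal.mem_span_singleton'.mp hx
      rw [map_mul, hΦ'θ, mul_zero]
    set Ψ : (GaloisEisenstein p A (u : A) e s ⧸ Ideal.span {geTheta p A (u : A) e s}) →+* A ⧸ Ip :=
      Ideal.Quotient.lift _ Φ' h2 with hΨ
    have hsurj : Function.Surjective Ψ := by
      intro y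
      obtain ⟨a, rfl⟩ := Ideal.Quotient.mk_surjective y
      exact ⟨Ideal.Quotient.mk _ (Ideal.Quotient.mk It (C a)), by simp [hΨ, hΦ', hΦ]⟩
    -- mk (C p) ∈ span {θ}
    have hCp : (Ideal.Quotient.mk It (C (p : A))) ∈ Ideal.span {geTheta p A (u : A) e s} := by
      have hfz : Ideal.Quotient.mk It f = 0 :=
        Ideal.Quotient.eq_zero_iff_mem.mpr (Ideal.subset_span (by simp))
      have hxe : (Ideal.Quotient.mk It (C ((p : A) * u))) =
          (geTheta p A (u : A) e s) ^ e := by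
        have : Ideal.Quotient.mk It (X ^ e) - Ideal.Quotient.mk It (C ((p : A) * u)) = 0 := by
          rw [← map_sub, ← hfdef, hfz]
        have h' := sub_eq_zero.mp this
        rw [← h', map_pow]
        rfl
      have : (Ideal.Quotient.mk It (C (p : A))) =
          (geTheta p A (u : A) e s) ^ e * Ideal.Quotient.mk It (C ((u⁻¹ : Aˣ) : A)) := by
        rw [← hxe, ← map_mul, ← C_mul]
        congr 1
        rw [mul_assoc, Units.mul_inv, mul_one]
      rw [this]
      exact Ideal.mul_mem_right _ _
        (Ideal.pow_mem_of_mem _ (Ideal.mem_span_singleton_self _) e (by omega))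
    have hinj : Function.Injective Ψ := by
      rw [RingHom.injective_iff_ker_eq_bot, eq_bot_iff]
      intro x hx
      rw [RingHom.mem_ker] at hx
      obtain ⟨y, rfl⟩ := Ideal.Quotient.mk_surjective x
      obtain ⟨g, rfl⟩ := Ideal.Quotient.mk_surjective y
      rw [hΨ, Ideal.Quotient.lift_mk, hΦ', Ideal.Quotient.lift_mk] at hx
      have hc0 : Ideal.Quotient.mk Ip (g.coeff 0) = 0 := by
        rw [hΦ, coe_eval₂RingHom, eval₂_at_zero] at hx
        exact hx
      rw [Ideal.Quotient.eq_zero_iff_mem, hIp, Ideal.mem_span_singleton] at hc0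
      obtain ⟨a, ha⟩ := hc0
      rw [Submodule.mem_bot, Ideal.Quotient.eq_zero_iff_mem]
      have hg : Ideal.Quotient.mk It g =
          Ideal.Quotient.mk It (g.divX * X) + Ideal.Quotient.mk It (C (g.coeff 0)) := by
        rw [← map_add]
        congr 1
        rw [mul_comm]
        exact (X_mul_divX_add g).symm
      rw [hg]
      refine Ideal.add_mem _ ?_ ?_
      · exact Ideal.mem_span_singleton'.mpr ⟨Ideal.Quotient.mk It g.divX, (map_mul _ _ _).symm⟩
      · have h2' : Ideal.Quotient.mk It (C (g.coeff 0)) =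
            Ideal.Quotient.mk It (C (p : A)) * Ideal.Quotient.mk It (C a) := by
          rw [← map_mul, ← C_mul, ← ha]
        exact h2' ▸ Ideal.mul_mem_right _ _ hCp
    -- IsField of A ⧸ Ip
    have hAfield : IsField (A ⧸ Ip) := by
      rw [← Ideal.Quotient.maximal_ideal_iff_isField_quotient, ← hmax]
      exact IsLocalRing.maximalIdeal.isMaximal A
    have Eq1 : (GaloisEisenstein p A (u : A) e s ⧸ Ideal.span {geTheta p A (u : A) e s}) ≃+* A ⧸ Ip :=
      RingEquiv.ofBijective Ψ ⟨hinj, hsurj⟩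
    constructor
    · exact MulEquiv.isField hAfield Eq1.toMulEquiv
    · rw [Nat.card_congr Eq1.toEquiv]
      rw [← hres]
      exact (Nat.card_congr (Ideal.quotEquivOfEq hmax).toEquiv).symm

  obtain ⟨hfin, hs1ne⟩ : Finite (GaloisEisenstein p A (u : A) e s) ∧
      geTheta p A (u : A) e s ^ (s - 1) ≠ 0 := by

    have hn1 : 1 ≤ n - 1 := by omega
    set t : ℕ := s - (n - 1) * e with ht
    have hts : s = (n - 1) * e + t := by omega
    have ht1 : 1 ≤ t := by omega
    have ha1 : (n - 1) * e = n * e - e := Nat.sub_one_mul n e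
    have ha2 : e ≤ n * e := Nat.le_mul_of_pos_left e (by omega)
    have ha3 : e * (n - 1) = (n - 1) * e := mul_comm _ _
    have ha4 : e * n = n * e := mul_comm _ _
    have hte : t ≤ e := by omega
    -- char facts
    have hpnn : (p : A) ^ n = 0 := by
      have : ((p ^ n : ℕ) : A) = 0 := (CharP.cast_eq_zero_iff A (p ^ n) (p ^ n)).mpr dvd_rfl
      push_cast at this
      exact this
    have hpn1 : (p : A) ^ (n - 1) ≠ 0 := by
      intro h
      have : ((p ^ (n - 1) : ℕ) : A) = 0 := by push_cast; exact h
      rw [CharP.cast_eq_zero_iff A (p ^ n)] at this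
      exact absurd ((Nat.pow_dvd_pow_iff_le_right hp.one_lt).mp this) (by omega)
    set f : A[X] := X ^ e - C ((p : A) * u) with hfdef
    have hmono : f.Monic := monic_X_pow_sub_C _ (by omega)
    set B := AdjoinRoot f with hB
    set ρ : B := AdjoinRoot.root f with hρ
    -- the equivalence
    have hsup : (Ideal.span {f, X ^ s} : Ideal A[X]) =
        Ideal.span {f} ⊔ Ideal.span {X ^ s} := by
      rw [Ideal.span_insert]
    have hmapspan : Ideal.map (Ideal.Quotient.mk (Ideal.span {f})) (Ideal.span {X ^ s})
        = Ideal.span {ρ ^ s} := by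
      rw [Ideal.map_span, Set.image_singleton]
      congr 1
    have hTS2 : @Ideal.IsTwoSided (A[X] ⧸ Ideal.span {f}) Ring.toSemiring (Ideal.span {ρ ^ s}) :=
      ⟨fun b ha => mul_comm b _ ▸ Ideal.mul_mem_left _ _ ha⟩
    let E : GaloisEisenstein p A (u : A) e s ≃+* (B ⧸ Ideal.span {ρ ^ s}) :=
      (Ideal.quotEquivOfEq hsup).trans
        ((DoubleQuot.quotQuotEquivQuotSup (Ideal.span {f}) (Ideal.span {X ^ s})).symm.trans
          (@Ideal.quotEquivOfEq _ _ _ _ _ hTS2 hmapspan))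
    have hE : ∀ g : A[X], E (Ideal.Quotient.mk _ g) =
        Ideal.Quotient.mk (Ideal.span {ρ ^ s}) (AdjoinRoot.mk f g) := by
      intro g
      show (@Ideal.quotEquivOfEq _ _ _ _ _ hTS2 hmapspan)
          ((DoubleQuot.quotQuotEquivQuotSup _ _).symm
            ((Ideal.quotEquivOfEq hsup) (Ideal.Quotient.mk _ g))) = _
      rw [Ideal.quotEquivOfEq_mk, DoubleQuot.quotQuotEquivQuotSup_symm_quotQuotMk]
      show (@Ideal.quotEquivOfEq _ _ _ _ _ hTS2 hmapspan)
          (Ideal.Quotient.mk _ (Ideal.Quotient.mk (Ideal.span {f}) g)) = _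
      rfl
    -- power basis
    set pb : PowerBasis A B := AdjoinRoot.powerBasis' hmono with hpb
    have hdim : pb.dim = e := by
      rw [hpb]
      show f.natDegree = e
      rw [hfdef]
      exact natDegree_X_pow_sub_C
    have hgen : pb.gen = ρ := rfl
    -- finiteness
    haveI hfinB : Finite B := Finite.of_equiv _ pb.basis.equivFun.toEquiv.symm
    haveI hfinQ : Finite (B ⧸ Ideal.span {ρ ^ s}) := Quotient.finite _
    have hfin : Finite (GaloisEisenstein p A (u : A) e s) :=
      Finite.of_equiv _ E.toEquiv.symm
    refine ⟨hfin, ?_⟩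
    -- root^e
    have hre : ρ ^ e = algebraMap A B ((p : A) * u) := by
      have h0 : AdjoinRoot.mk f (X ^ e) - AdjoinRoot.mk f (C ((p : A) * u)) = 0 := by
        rw [← map_sub, ← hfdef]
        exact AdjoinRoot.mk_self
      have h1 := sub_eq_zero.mp h0
      rw [map_pow, AdjoinRoot.mk_X, AdjoinRoot.mk_C] at h1
      rw [h1, AdjoinRoot.algebraMap_eq]
    -- submodule N
    set N : Submodule A B := Submodule.span A
        ((fun i => (algebraMap A B) ((p : A) ^ (n - 1)) * ρ ^ i) '' (Set.Ico t e)) with hN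
    have hNmem : ∀ i : ℕ, ρ ^ (i + s) ∈ N := by
      intro i
      rcases lt_or_ge (i + t) e with h | h
      · have key : ρ ^ (i + s) =
            ((u : A) ^ (n - 1)) • ((algebraMap A B) ((p : A) ^ (n - 1)) * ρ ^ (i + t)) := by
          have his : i + s = e * (n - 1) + (i + t) := by omega
          rw [his, pow_add, pow_mul, hre, ← map_pow, mul_pow, map_mul, Algebra.smul_def]
          ring
        rw [key]
        exact N.smul_mem _ (Submodule.subset_span ⟨i + t, ⟨by omega, h⟩, rfl⟩)
      · have key : ρ ^ (i + s) = 0 := by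
          have his : i + s = (i + t - e) + e * n := by omega
          rw [his, pow_add, pow_mul, hre, ← map_pow, mul_pow, map_mul, hpnn, map_zero,
            zero_mul, mul_zero]
        rw [key]; exact N.zero_mem
    have hsub : ∀ x ∈ Ideal.span {ρ ^ s}, x ∈ N := by
      intro x hx
      obtain ⟨b, rfl⟩ := Ideal.mem_span_singleton'.mp hx
      obtain ⟨g, rfl⟩ := AdjoinRoot.mk_surjective b
      clear hx
      induction g using Polynomial.induction_on' with
      | add a b ha hb =>
        rw [map_add, add_mul]
        exact N.add_mem ha hb
      | monomial k a =>
        have : AdjoinRoot.mk f ((monomial k) a) * ρ ^ s = a • ρ ^ (k + s) := by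
          rw [← C_mul_X_pow_eq_monomial, map_mul, map_pow, AdjoinRoot.mk_X, AdjoinRoot.mk_C,
            Algebra.smul_def, pow_add, AdjoinRoot.algebraMap_eq]
          ring
        rw [this]
        exact N.smul_mem _ (hNmem k)
    -- the coordinate functional
    have htd : t - 1 < pb.dim := by rw [hdim]; omega
    set j : Fin pb.dim := ⟨t - 1, htd⟩ with hj
    set ℓ : B →ₗ[A] A := pb.basis.coord j with hℓ
    have hbasis : ∀ i : ℕ, (hi : i < pb.dim) → pb.basis ⟨i, hi⟩ = ρ ^ i := by
      intro i hi
      rw [PowerBasis.coe_basis]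
      rfl
    have hℓN : ∀ x ∈ N, ℓ x = 0 := by
      have : N ≤ LinearMap.ker ℓ := by
        rw [hN, Submodule.span_le]
        rintro x ⟨i, ⟨hit, hie⟩, rfl⟩
        simp only [SetLike.mem_coe, LinearMap.mem_ker]
        have hi' : i < pb.dim := by omega
        rw [← Algebra.smul_def, ← hbasis i hi', map_smul, hℓ, Module.Basis.coord_apply,
          Module.Basis.repr_self, Finsupp.single_apply]
        have : ¬ ((⟨i, hi'⟩ : Fin pb.dim) = j) := by
          simp only [hj, Fin.mk.injEq]
          omega
        rw [if_neg this, smul_zero]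
      exact fun x hx => this hx
    have hℓval : ℓ (ρ ^ (s - 1)) = ((p : A) * u) ^ (n - 1) := by
      have hkey : ρ ^ (s - 1) = (((p : A) * u) ^ (n - 1)) • ρ ^ (t - 1) := by
        have : s - 1 = e * (n - 1) + (t - 1) := by omega
        rw [this, pow_add, pow_mul, hre, ← map_pow, Algebra.smul_def]
      have ht' : t - 1 < pb.dim := htd
      rw [hkey, map_smul, ← hbasis (t - 1) htd, hℓ, Module.Basis.coord_apply, Module.Basis.repr_self]
      have : j = (⟨t - 1, htd⟩ : Fin pb.dim) := hj
      rw [← this, Finsupp.single_apply, if_pos rfl, smul_eq_mul, mul_one]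
    have hval0 : ((p : A) * u) ^ (n - 1) ≠ 0 := by
      intro hcon
      apply hpn1
      have := congrArg (fun y => y * ((u⁻¹ : Aˣ) : A) ^ (n - 1)) hcon
      simp only [zero_mul, mul_pow] at this
      rw [mul_assoc, ← mul_pow, Units.mul_inv, one_pow, mul_one] at this
      exact this
    -- conclude
    have hnotmem : ρ ^ (s - 1) ∉ Ideal.span {ρ ^ s} := by
      intro hmem
      exact hval0 (hℓval ▸ hℓN _ (hsub _ hmem))
    intro hzero
    apply hnotmem
    have : E (geTheta p A (u : A) e s ^ (s - 1)) = 0 := by rw [hzero, map_zero]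
    rw [show geTheta p A (u : A) e s ^ (s - 1) =
        Ideal.Quotient.mk _ (X ^ (s - 1) : A[X]) from (map_pow _ _ _).symm, hE] at this
    rw [← Ideal.Quotient.eq_zero_iff_mem]
    rw [map_pow, AdjoinRoot.mk_X] at this
    exact this

  have hθs : geTheta p A (u : A) e s ^ s = 0 := by
    show (Ideal.Quotient.mk _ X : GaloisEisenstein p A (u:A) e s) ^ s = 0
    rw [← map_pow, Ideal.Quotient.eq_zero_iff_mem]
    exact Ideal.subset_span (by simp)
  have hθe : geTheta p A (u : A) e s ^ e =
      algebraMap A (GaloisEisenstein p A (u : A) e s) ((p : A) * u) := by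
    show (Ideal.Quotient.mk _ X : GaloisEisenstein p A (u:A) e s) ^ e = _
    have halg : algebraMap A (GaloisEisenstein p A (u:A) e s) ((p : A) * u) =
        Ideal.Quotient.mk _ (C ((p : A) * u)) := rfl
    rw [halg, ← map_pow, Ideal.Quotient.mk_eq_mk_iff_sub_mem]
    exact Ideal.subset_span (by simp)
  have hunit : ∀ {x : GaloisEisenstein p A (u : A) e s},
      x ∉ Ideal.span {geTheta p A (u : A) e s} → IsUnit x :=
    fun hx => GEAux.isUnit_of_not_mem hθs hfield hx
  have hzero : ∀ {k : ℕ}, geTheta p A (u : A) e s ^ k ∈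
      Ideal.span {geTheta p A (u : A) e s ^ (k + 1)} → geTheta p A (u : A) e s ^ k = 0 :=
    fun h => GEAux.pow_eq_zero_of_mem_succ hθs hfield h
  have hloc : IsLocalRing (GaloisEisenstein p A (u : A) e s) :=
    GEAux.isLocalRing hθs hfield
  have hmaximal : (Ideal.span {geTheta p A (u : A) e s}).IsMaximal :=
    Ideal.Quotient.maximal_of_isField _ hfield
  have h4 : ∀ I : Ideal (GaloisEisenstein p A (u : A) e s), I ≠ ⊤ →
      I ≤ Ideal.span {geTheta p A (u : A) e s} := by
    intro I hI
    haveI := hloc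
    rw [IsLocalRing.eq_maximalIdeal hmaximal]
    exact IsLocalRing.le_maximalIdeal hI
  have h10 : Nat.card (GaloisEisenstein p A (u : A) e s) = p ^ (r * s) := by
    haveI := hfin
    rw [GEAux2.card_eq hθs hunit hzero hs1ne hsge, hcardres, ← pow_mul]
  exact ⟨hfin, hloc, hmaximal, h4, hθe, hθs, hs1ne,
    fun I => GEAux.ideal_eq_pow hθs hfield I,
    fun k hk => GEAux.chain_strict hθs hfield hs1ne hk, h10⟩
end

section
/- Let A = GR(p^n, r) be a Galois ring and let u, v be units of A. If there exists a unit z of GE(u) such that the image of u in GE(u) equals the image of v in GE(u) multiplied by z^e, then GE(u) and GE(v) are isomorphic as A-algebras; in other words, if u·γ = v for some γ ∈ A that becomes an e-th power of a unit in GE(u), then GE(u) ≅ GE(v). -/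
open Polynomial

theorem Ideal.restrictScalars_span_singleton_eq_range (R : Type*) {S : Type*} [CommRing R]
    [CommRing S] [Algebra R S] (a : S) :
    (Ideal.span {a}).restrictScalars R = LinearMap.range (LinearMap.mulLeft R a) := by
  ext x
  simp [Ideal.mem_span_singleton', mul_comm]

namespace AdjoinRoot

variable {R : Type*} [CommRing R]

noncomputable def powerBasisLinearEquiv {f g : R[X]} (hf : f.Monic) (hg : g.Monic)
    (h : f.natDegree = g.natDegree) : AdjoinRoot f ≃ₗ[R] AdjoinRoot g :=
  (powerBasis' hf).basis.equiv (powerBasis' hg).basis (finCongr h)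

theorem powerBasisLinearEquiv_root_pow {f g : R[X]} (hf : f.Monic) (hg : g.Monic)
    (h : f.natDegree = g.natDegree) {k : ℕ} (hk : k < f.natDegree) :
    powerBasisLinearEquiv hf hg h (root f ^ k) = root g ^ k := by
  have hb := (powerBasis' hf).basis_eq_pow ⟨k, hk⟩
  rw [powerBasis'_gen] at hb
  rw [← hb, powerBasisLinearEquiv, Module.Basis.equiv_apply, PowerBasis.basis_eq_pow,
    powerBasis'_gen]
  rfl

theorem root_X_pow_sub_C_pow (e : ℕ) (a : R) :
    root (X ^ e - C a) ^ e = algebraMap R (AdjoinRoot (X ^ e - C a)) a := by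
  rw [← sub_eq_zero, ← mk_X, ← map_pow, algebraMap_eq, ← mk_C, ← map_sub, mk_self]

section Eisenstein

variable {p m e : ℕ}

theorem pow_smul_root_pow_eq_zero (hp : (p : R) ^ (m + 1) = 0) (w : R) {k : ℕ} (hk : e ≤ k) :
    (p : R) ^ m • root (X ^ e - C ((p : R) * w)) ^ k = 0 := by
  obtain ⟨j, rfl⟩ := Nat.exists_eq_add_of_le hk
  rw [pow_add, root_X_pow_sub_C_pow, ← smul_mul_assoc, Algebra.smul_def, ← map_mul,
    ← mul_assoc, ← pow_succ, hp, zero_mul, map_zero, zero_mul]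

variable {u v : R}
  (Φ : AdjoinRoot (X ^ e - C ((p : R) * u)) →ₗ[R] AdjoinRoot (X ^ e - C ((p : R) * v)))

theorem map_pow_smul_root_pow (hΦ : ∀ k < e, Φ (root _ ^ k) = root _ ^ k)
    (hp : (p : R) ^ (m + 1) = 0) (k : ℕ) :
    Φ ((p : R) ^ m • root _ ^ k) = (p : R) ^ m • root _ ^ k := by
  rcases lt_or_ge k e with hk | hk
  · rw [map_smul, hΦ k hk]
  · rw [pow_smul_root_pow_eq_zero hp u hk, pow_smul_root_pow_eq_zero hp v hk, map_zero]

theorem comp_mulLeft_pow_smul_root_pow (he : e ≠ 0) (hΦ : ∀ k < e, Φ (root _ ^ k) = root _ ^ k)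
    (hp : (p : R) ^ (m + 1) = 0) (t : ℕ) :
    Φ ∘ₗ LinearMap.mulLeft R ((p : R) ^ m • root (X ^ e - C ((p : R) * u)) ^ t) =
      (LinearMap.mulLeft R ((p : R) ^ m • root (X ^ e - C ((p : R) * v)) ^ t) :
        AdjoinRoot (X ^ e - C ((p : R) * v)) →ₗ[R] AdjoinRoot (X ^ e - C ((p : R) * v))) ∘ₗ Φ := by
  refine (powerBasis' (monic_X_pow_sub_C _ he)).basis.ext fun i => ?_
  have hi : (i : ℕ) < e := i.isLt.trans_le (natDegree_sub_C.trans_le (natDegree_X_pow_le e))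
  simp only [PowerBasis.basis_eq_pow, powerBasis'_gen, LinearMap.comp_apply,
    LinearMap.mulLeft_apply, hΦ i hi, smul_mul_assoc, ← pow_add, map_pow_smul_root_pow Φ hΦ hp]

theorem span_root_pow_eq_span_pow_smul_root_pow (w : Rˣ) (t : ℕ) :
    Ideal.span {root (X ^ e - C ((p : R) * w)) ^ (m * e + t)} =
      Ideal.span {(p : R) ^ m • root (X ^ e - C ((p : R) * w)) ^ t} := by
  have hρ := root_X_pow_sub_C_pow e ((p : R) * w)
  set f := X ^ e - C ((p : R) * w)
  have hw : IsUnit (algebraMap R (AdjoinRoot f) ((w : R) ^ m)) := (w.isUnit.pow m).map _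
  have hsplit : root f ^ (m * e + t) =
      algebraMap R (AdjoinRoot f) ((w : R) ^ m) * ((p : R) ^ m • root f ^ t) := by
    rw [pow_add, pow_mul', hρ, Algebra.smul_def]
    simp only [map_mul, map_pow]
    ring
  rw [hsplit, Ideal.span_singleton_mul_left_unit hw]

end Eisenstein

variable (R) in
noncomputable def quotSpanMkEquiv (f g : R[X]) :
    (AdjoinRoot f ⧸ Ideal.span {mk f g}) ≃ₐ[R] R[X] ⧸ (Ideal.span {f, g} : Ideal R[X]) :=
  have hmap : Ideal.span {mk f g} =
      ((Ideal.span {g}).map (Ideal.Quotient.mkₐ R (Ideal.span {f})) : Ideal (AdjoinRoot f)) :=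
    (congrArg Ideal.span (Set.image_singleton).symm).trans (Ideal.map_span _ _).symm
  (Ideal.quotientEquivAlgOfEq R hmap).trans <|
    (DoubleQuot.quotQuotEquivQuotSupₐ R (Ideal.span {f}) (Ideal.span {g})).trans
      (Ideal.quotientEquivAlgOfEq R (Ideal.span_insert f {g}).symm)

end AdjoinRoot

theorem Algebra.adjoin_singleton_eq_top_of_isNilpotent {R S : Type*} [CommRing R] [CommRing S]
    [Algebra R S] {y : S} (hy : IsNilpotent y)
    (h : ∀ x : S, ∃ a : R, ∃ x' : S, x = algebraMap R S a + y * x') :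
    Algebra.adjoin R {y} = ⊤ := by
  obtain ⟨k, hk⟩ := hy
  have hyk : ∀ j (x : S), ∃ b ∈ Algebra.adjoin R {y}, ∃ x' : S, x = b + y ^ j * x' := by
    intro j
    induction j with
    | zero => exact fun x => ⟨0, zero_mem _, x, by simp⟩
    | succ j ih =>
      intro x
      obtain ⟨b, hb, x', rfl⟩ := ih x
      obtain ⟨a, x'', rfl⟩ := h x'
      refine ⟨b + y ^ j * algebraMap R S a, add_mem hb (mul_mem ?_ (Subalgebra.algebraMap_mem _ a)),
        x'', by ring⟩
      exact pow_mem (Algebra.self_mem_adjoin_singleton R y) j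
  refine Algebra.eq_top_iff.mpr fun x => ?_
  obtain ⟨b, hb, x', rfl⟩ := hyk k x
  rwa [hk, zero_mul, add_zero]

namespace GaloisEisenstein

open AdjoinRoot

variable {A : Type} [CommRing A] {p e s : ℕ}

theorem map_span_root_pow {m : ℕ} {u v : Aˣ}
    (Φ : AdjoinRoot (X ^ e - C ((p : A) * u)) ≃ₗ[A] AdjoinRoot (X ^ e - C ((p : A) * v)))
    (hΦ : ∀ k < e, Φ (root _ ^ k) = root _ ^ k) (he : e ≠ 0) (hp : (p : A) ^ (m + 1) = 0)
    (hs : m * e ≤ s) :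
    ((Ideal.span {root (X ^ e - C ((p : A) * u)) ^ s}).restrictScalars A).map Φ.toLinearMap =
      (Ideal.span {root (X ^ e - C ((p : A) * v)) ^ s}).restrictScalars A := by
  obtain ⟨t, rfl⟩ := Nat.exists_eq_add_of_le hs
  rw [span_root_pow_eq_span_pow_smul_root_pow, span_root_pow_eq_span_pow_smul_root_pow,
    Ideal.restrictScalars_span_singleton_eq_range, Ideal.restrictScalars_span_singleton_eq_range,
    ← LinearMap.range_comp, comp_mulLeft_pow_smul_root_pow Φ.toLinearMap he hΦ hp,
    LinearMap.range_comp_of_range_eq_top _ (LinearEquiv.range Φ)]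

noncomputable def linearEquiv {m : ℕ} (he : e ≠ 0) (hp : (p : A) ^ (m + 1) = 0) (hs : m * e ≤ s)
    (u v : Aˣ) : GaloisEisenstein p A u e s ≃ₗ[A] GaloisEisenstein p A v e s :=
  let Φ := powerBasisLinearEquiv (monic_X_pow_sub_C ((p : A) * u) he)
    (monic_X_pow_sub_C ((p : A) * v) he) (natDegree_sub_C.trans natDegree_sub_C.symm)
  have hΦ : ∀ k < e, Φ (root _ ^ k) = root _ ^ k := fun k hk => by
    -- `X ^ e - C a` has degree `e` only over a nontrivial ring
    rcases subsingleton_or_nontrivial (AdjoinRoot (X ^ e - C ((p : A) * v))) with _ | _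
    · exact Subsingleton.elim _ _
    have := Module.nontrivial A (AdjoinRoot (X ^ e - C ((p : A) * v)))
    exact powerBasisLinearEquiv_root_pow _ _ _ (by rwa [natDegree_X_pow_sub_C])
  (quotSpanMkEquiv A _ _).symm.toLinearEquiv ≪≫ₗ
    (Submodule.Quotient.restrictScalarsEquiv A _).symm ≪≫ₗ
    Submodule.Quotient.equiv _ _ Φ (map_span_root_pow Φ hΦ he hp hs) ≪≫ₗ
    Submodule.Quotient.restrictScalarsEquiv A _ ≪≫ₗ (quotSpanMkEquiv A _ _).toLinearEquiv

theorem finite (he : e ≠ 0) (w : A) : Module.Finite A (GaloisEisenstein p A w e s) :=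
  have := (monic_X_pow_sub_C ((p : A) * w) he).finite_adjoinRoot
  Module.Finite.equiv (quotSpanMkEquiv A _ _).toLinearEquiv

theorem bijective_of_surjective {m : ℕ} (he : e ≠ 0) (hp : (p : A) ^ (m + 1) = 0)
    (hs : m * e ≤ s) {u v : Aˣ} (φ : GaloisEisenstein p A v e s →ₐ[A] GaloisEisenstein p A u e s)
    (hφ : Function.Surjective φ) : Function.Bijective φ :=
  have : Module.Finite A (GaloisEisenstein p A u e s) := finite he _
  OrzechProperty.bijective_of_surjective_of_injective (linearEquiv he hp hs v u).toLinearMap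
    φ.toLinearMap (LinearEquiv.injective _) hφ

section Generator

variable {w : A}

noncomputable def gen : GaloisEisenstein p A w e s := Ideal.Quotient.mk _ X

theorem gen_pow_eq : (gen : GaloisEisenstein p A w e s) ^ e = algebraMap A _ (p * w) := by
  rw [gen, ← map_pow, ← Ideal.Quotient.mk_algebraMap, Polynomial.algebraMap_eq,
    Ideal.Quotient.eq]
  exact Ideal.subset_span (by simp)

theorem gen_pow_eq_zero : (gen : GaloisEisenstein p A w e s) ^ s = 0 := by
  rw [gen, ← map_pow, Ideal.Quotient.eq_zero_iff_mem]
  exact Ideal.subset_span (by simp)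

theorem exists_eq_algebraMap_add_gen_mul (x : GaloisEisenstein p A w e s) :
    ∃ a : A, ∃ x', x = algebraMap A _ a + gen * x' := by
  obtain ⟨q, rfl⟩ := Ideal.Quotient.mk_surjective x
  refine ⟨q.coeff 0, Ideal.Quotient.mk _ q.divX, ?_⟩
  rw [gen, ← map_mul, ← Ideal.Quotient.mk_algebraMap, Polynomial.algebraMap_eq, ← map_add,
    add_comm, X_mul_divX_add]

theorem unit_mul_gen_pow_eq_zero (z : (GaloisEisenstein p A w e s)ˣ) :
    ((z : GaloisEisenstein p A w e s) * gen) ^ s = 0 := by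
  rw [mul_pow, gen_pow_eq_zero, mul_zero]

theorem adjoin_unit_mul_gen_eq_top (z : (GaloisEisenstein p A w e s)ˣ) :
    Algebra.adjoin A {(z : GaloisEisenstein p A w e s) * gen} = ⊤ := by
  refine Algebra.adjoin_singleton_eq_top_of_isNilpotent ⟨s, unit_mul_gen_pow_eq_zero z⟩ fun x => ?_
  obtain ⟨a, x', rfl⟩ := exists_eq_algebraMap_add_gen_mul x
  exact ⟨a, z⁻¹ * x', by rw [mul_mul_mul_comm, mul_comm gen, Units.mul_inv, one_mul]⟩

theorem inv_mul_gen_pow_eq {v : A} (z : (GaloisEisenstein p A w e s)ˣ)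
    (hz : algebraMap A _ w = algebraMap A _ v * (z : GaloisEisenstein p A w e s) ^ e) :
    (((z⁻¹ : (GaloisEisenstein p A w e s)ˣ) : GaloisEisenstein p A w e s) * gen) ^ e =
      algebraMap A _ (p * v) := by
  have hz1 : ((z⁻¹ : (GaloisEisenstein p A w e s)ˣ) : GaloisEisenstein p A w e s) ^ e *
      (z : GaloisEisenstein p A w e s) ^ e = 1 := by
    rw [← mul_pow, Units.inv_mul, one_pow]
  simp only [mul_pow, gen_pow_eq, map_mul, hz]
  linear_combination (algebraMap A _ (p : A) * algebraMap A _ v) * hz1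

end Generator

section Lift

variable {S : Type*} [CommRing S] [Algebra A S] {w : A} {y : S}

noncomputable def lift (hye : y ^ e = algebraMap A S (p * w)) (hys : y ^ s = 0) :
    GaloisEisenstein p A w e s →ₐ[A] S :=
  Ideal.Quotient.liftₐ _ (aeval y) fun q hq => by
    refine RingHom.mem_ker.mp ((Ideal.span_le (I := RingHom.ker (aeval y))).mpr ?_ hq)
    rintro q (rfl | rfl) <;> simp [hye, hys]

theorem lift_gen (hye : y ^ e = algebraMap A S (p * w)) (hys : y ^ s = 0) :
    lift hye hys gen = y :=
  aeval_X y

theorem lift_surjective (hye : y ^ e = algebraMap A S (p * w)) (hys : y ^ s = 0)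
    (hy : Algebra.adjoin A {y} = ⊤) : Function.Surjective (lift hye hys) := by
  rw [← AlgHom.range_eq_top, eq_top_iff, ← hy, Algebra.adjoin_le_iff, Set.singleton_subset_iff]
  exact ⟨gen, lift_gen hye hys⟩

end Lift

end GaloisEisenstein

theorem galoisEisenstein_iso_of_eth_power_general (p n e s : ℕ)
    (hn : 2 ≤ n) (he : 1 ≤ e) (hs₁ : (n - 1) * e < s)
    (A : Type) [CommRing A]
    (hchar : CharP A (p ^ n))
    (u v : Aˣ)
    (h : ∃ z : (GaloisEisenstein p A (u : A) e s)ˣ,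
      algebraMap A (GaloisEisenstein p A (u : A) e s) (u : A) =
        algebraMap A (GaloisEisenstein p A (u : A) e s) (v : A) *
          (z : GaloisEisenstein p A (u : A) e s) ^ e) :
    Nonempty (GaloisEisenstein p A (u : A) e s ≃ₐ[A] GaloisEisenstein p A (v : A) e s) := by
  obtain ⟨z, hz⟩ := h
  have hp : (p : A) ^ (n - 1 + 1) = 0 := by
    rw [Nat.sub_add_cancel (by omega), ← Nat.cast_pow, CharP.cast_eq_zero]
  let φ := GaloisEisenstein.lift (GaloisEisenstein.inv_mul_gen_pow_eq z hz)
    (GaloisEisenstein.unit_mul_gen_pow_eq_zero z⁻¹)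
  have hφ : Function.Surjective φ :=
    GaloisEisenstein.lift_surjective _ _ (GaloisEisenstein.adjoin_unit_mul_gen_eq_top z⁻¹)
  exact ⟨(AlgEquiv.ofBijective φ
    (GaloisEisenstein.bijective_of_surjective (by omega) hp hs₁.le φ hφ)).symm⟩

/-- **Isomorphism criterion for pure Galois–Eisenstein rings.** Let `A = GR(p^n, r)` be a
Galois ring and `u`, `v` units of `A`.  If the image of `u` in `GE(u)` equals the image of
`v` times `z^e` for some unit `z` of `GE(u)`, then `GE(u)` and `GE(v)` are isomorphic as
`A`-algebras. -/
theorem galoisEisenstein_iso_of_eth_power (p n r e s : ℕ) (hp : p.Prime)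
    (hn : 2 ≤ n) (hr : 0 < r) (he : 1 ≤ e) (hs₁ : (n - 1) * e < s) (hs₂ : s ≤ n * e)
    (A : Type) [CommRing A] [Fintype A] [IsLocalRing A]
    (hchar : CharP A (p ^ n))
    (hmax : IsLocalRing.maximalIdeal A = Ideal.span {(p : A)})
    (hres : Nat.card (IsLocalRing.ResidueField A) = p ^ r)
    (u v : Aˣ)
    (h : ∃ z : (GaloisEisenstein p A (u : A) e s)ˣ,
      algebraMap A (GaloisEisenstein p A (u : A) e s) (u : A) =
        algebraMap A (GaloisEisenstein p A (u : A) e s) (v : A) *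
          (z : GaloisEisenstein p A (u : A) e s) ^ e) :
    Nonempty (GaloisEisenstein p A (u : A) e s ≃ₐ[A] GaloisEisenstein p A (v : A) e s) :=
  galoisEisenstein_iso_of_eth_power_general p n e s hn he hs₁ A hchar u v h
end
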